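/- arXiv:math/0004011 — 7 statements merged into one kernel-verified Lean document; each statement's English description precedes it below -/
import Mathlib

section
/- In the quantum Euclidean space algebra ℝ³_q extended by an inverse (X³)⁻¹ of X³ and an element R² central satisfying R² = X³X³ − qX⁺X⁻ − q⁻¹X⁻X⁺, the elements t⁺ = −(λq³)⁻¹√(1+q²) X⁺(X³)⁻¹, t⁻ = (q²/λ)√(1+q²) X⁻(X³)⁻¹, t³ = λ⁻¹(1 + R²(X³)⁻²) satisfy the su_q(2) relations: q⁻¹t⁺t⁻ − qt⁻t⁺ = t³, q²t³t⁺ − q⁻²t⁺t³ = (q+q⁻¹)t⁺, and q²t⁻t³ − q⁻²t³t⁻ = (q+q⁻¹)t⁻. -/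
/-!
Put u = X⁺(X³)⁻¹, v = X⁻(X³)⁻¹ and S = R²(X³)⁻². Moving (X³)⁻¹ past X^± costs a factor q^∓2,
so uv and vu are multiples of P = X⁺X⁻(X³)⁻² and M = X⁻X⁺(X³)⁻², where M − P = λ and
S = 1 − qP − q⁻¹M; this gives the first relation. As R² is central, S q-commutes with u and v
with factors q^∓4, and the other two relations follow from q² − q⁻² = (q + q⁻¹)λ.
-/

section QAlgebra

variable {K A : Type*} [Field K] [Ring A] [Algebra K A]

def QCommute (c : K) (x y : A) : Prop := x * y = c • (y * x)

namespace QCommute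

variable {c d : K} {x y z : A}

theorem of_commute (h : Commute x y) : QCommute (1 : K) x y := by
  rw [QCommute, one_smul, h.eq]

theorem mul_left (hx : QCommute c x z) (hy : QCommute d y z) : QCommute (c * d) (x * y) z := by
  rw [QCommute, mul_assoc, hy, mul_smul_comm, ← mul_assoc, hx, smul_mul_assoc, smul_smul,
    mul_comm c, mul_assoc]

theorem mul_right (hy : QCommute c x y) (hz : QCommute d x z) : QCommute (c * d) x (y * z) := by
  rw [QCommute, ← mul_assoc, hy, smul_mul_assoc, mul_assoc, hz, mul_smul_comm, smul_smul,
    mul_assoc]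

theorem smul_right (h : QCommute c x y) (a : K) : QCommute c x (a • y) := by
  rw [QCommute, mul_smul_comm, h, smul_mul_assoc, smul_comm]

theorem inverse_left {xi : A} (h : QCommute c x y) (hc : c ≠ 0) (hl : xi * x = 1)
    (hr : x * xi = 1) : QCommute c⁻¹ xi y := by
  calc xi * y = xi * (y * x) * xi := by rw [mul_assoc, mul_assoc, hr, mul_one]
    _ = c⁻¹ • (xi * (x * y) * xi) := by
      rw [h, mul_smul_comm, smul_mul_assoc, inv_smul_smul₀ hc]
    _ = c⁻¹ • (y * xi) := by rw [← mul_assoc, hl, one_mul]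

theorem mul_inv_mul_mul_inv {c : K} {x y xi : A} (h : QCommute c xi y) :
    x * xi * (y * xi) = c • (x * y * (xi * xi)) := by
  rw [mul_assoc, ← mul_assoc xi, h, smul_mul_assoc, mul_smul_comm]
  simp only [mul_assoc]

theorem mul_sq_mul_inv {c : K} {r x xi : A} (hrx : Commute r x) (hri : Commute r xi)
    (h : QCommute c xi x) : QCommute (c ^ 2) (r * (xi * xi)) (x * xi) := by
  have hxi : QCommute c xi (x * xi) := by
    simpa using h.mul_right (of_commute (Commute.refl xi))
  simpa [sq] using (of_commute (hrx.mul_right hri)).mul_left (hxi.mul_left hxi)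

end QCommute

theorem mul_self_mul_mul_self_eq_one {x xi : A} (h : x * xi = 1) : x * x * (xi * xi) = 1 := by
  rw [mul_assoc, ← mul_assoc x xi, h, one_mul, h]

section SuQTwo

variable {q lam : K}

theorem suq2_rel_t3_tp (hq : q ≠ 0) (hlam : lam = q - q⁻¹) (hlam0 : lam ≠ 0) {S t : A}
    (h : QCommute (q ^ 4)⁻¹ S t) :
    q ^ 2 • (lam⁻¹ • (1 + S) * t) - (q ^ 2)⁻¹ • (t * (lam⁻¹ • (1 + S))) = (q + q⁻¹) • t := by
  rw [QCommute] at h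
  simp only [smul_mul_assoc, mul_smul_comm, add_mul, mul_add, one_mul, mul_one, h, smul_add,
    smul_smul]
  match_scalars
  all_goals field_simp
  all_goals rw [hlam]; field_simp; ring

theorem suq2_rel_tm_t3 (hq : q ≠ 0) (hlam : lam = q - q⁻¹) (hlam0 : lam ≠ 0) {S t : A}
    (h : QCommute (q ^ 4) S t) :
    q ^ 2 • (t * (lam⁻¹ • (1 + S))) - (q ^ 2)⁻¹ • (lam⁻¹ • (1 + S) * t) = (q + q⁻¹) • t := by
  rw [QCommute] at h
  simp only [smul_mul_assoc, mul_smul_comm, add_mul, mul_add, one_mul, mul_one, h, smul_add,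
    smul_smul]
  match_scalars
  all_goals field_simp
  all_goals rw [hlam]; field_simp; ring

theorem suq2_rel_tp_tm (hq : q ≠ 0) (hlam : lam = q - q⁻¹) (hlam0 : lam ≠ 0) {a b : K}
    (hab : a * b * lam ^ 2 = -(q + q⁻¹)) {u v P M S : A} (huv : u * v = q ^ 2 • P)
    (hvu : v * u = (q ^ 2)⁻¹ • M) (hMP : M - P = lam • 1) (hS : S = 1 - q • P - q⁻¹ • M) :
    q⁻¹ • (a • u * (b • v)) - q • (b • v * (a • u)) = lam⁻¹ • (1 + S) := by
  obtain rfl : M = P + lam • 1 := by rw [← hMP, add_sub_cancel]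
  subst hS
  have hlam' : lam * q = q ^ 2 - 1 := by rw [hlam]; field_simp
  have hab' : a * b * lam ^ 2 * q = -(q ^ 2 + 1) := by rw [hab]; field_simp
  simp only [smul_mul_assoc, mul_smul_comm, huv, hvu, smul_add, smul_sub, smul_smul]
  match_scalars
  all_goals field_simp
  · linear_combination hab' - b * a * lam * hlam'
  · linear_combination -hab + hlam

end SuQTwo

end QAlgebra

theorem suq2_coeff_mul {q lam : ℝ} (hq : q ≠ 0) (hlam0 : lam ≠ 0) :
    (-(lam * q ^ 3)⁻¹ * √(1 + q ^ 2)) * (q ^ 2 / lam * √(1 + q ^ 2)) * lam ^ 2 = -(q + q⁻¹) := by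
  have hs := Real.sq_sqrt (by positivity : (0 : ℝ) ≤ 1 + q ^ 2)
  field_simp
  linear_combination -hs

theorem stmt1_general (q lam : ℝ) (hq : 1 < q) (hlam : lam = q - q⁻¹)
    (A : Type*) [Ring A] [Algebra ℂ A] (Xp Xm X3 Xi R2 tp tm t3 : A)
    (h1 : X3 * Xp = ((q : ℂ) ^ 2) • (Xp * X3))
    (h2 : X3 * Xm = ((q : ℂ) ^ 2)⁻¹ • (Xm * X3))
    (h3 : Xm * Xp - Xp * Xm = (lam : ℂ) • (X3 * X3))
    (h4 : Xi * X3 = 1) (h5 : X3 * Xi = 1)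
    (hR : R2 = X3 * X3 - (q : ℂ) • (Xp * Xm) - (q : ℂ)⁻¹ • (Xm * Xp))
    (hRp : Commute R2 Xp) (hRm : Commute R2 Xm)
    (hRi : Commute R2 Xi)
    (htp : tp = ((-(lam * q ^ 3)⁻¹ * Real.sqrt (1 + q ^ 2) : ℝ) : ℂ) • (Xp * Xi))
    (htm : tm = (((q ^ 2 / lam) * Real.sqrt (1 + q ^ 2) : ℝ) : ℂ) • (Xm * Xi))
    (ht3 : t3 = ((lam⁻¹ : ℝ) : ℂ) • (1 + R2 * (Xi * Xi))) :
    (q : ℂ)⁻¹ • (tp * tm) - (q : ℂ) • (tm * tp) = t3 ∧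
    (q : ℂ) ^ 2 • (t3 * tp) - ((q : ℂ) ^ 2)⁻¹ • (tp * t3) = ((q : ℂ) + (q : ℂ)⁻¹) • tp ∧
    (q : ℂ) ^ 2 • (tm * t3) - ((q : ℂ) ^ 2)⁻¹ • (t3 * tm) = ((q : ℂ) + (q : ℂ)⁻¹) • tm := by
  have hq0 : q ≠ 0 := (zero_lt_one.trans hq).ne'
  have hlam0 : lam ≠ 0 := by
    rw [hlam]
    exact (sub_pos.2 ((inv_lt_one_of_one_lt₀ hq).trans hq)).ne'
  have hlamC : (lam : ℂ) = q - (q : ℂ)⁻¹ := by rw [hlam]; push_cast; rfl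
  have hqC : (q : ℂ) ≠ 0 := by exact_mod_cast hq0
  have hlamC0 : (lam : ℂ) ≠ 0 := by exact_mod_cast hlam0
  have hq2 : (q : ℂ) ^ 2 ≠ 0 := pow_ne_zero 2 hqC
  have hip : QCommute ((q : ℂ) ^ 2)⁻¹ Xi Xp := QCommute.inverse_left h1 hq2 h4 h5
  have him : QCommute ((q : ℂ) ^ 2) Xi Xm := by
    simpa using QCommute.inverse_left h2 (inv_ne_zero hq2) h4 h5
  have hSp : QCommute ((q : ℂ) ^ 4)⁻¹ (R2 * (Xi * Xi)) (Xp * Xi) := by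
    convert QCommute.mul_sq_mul_inv hRp hRi hip using 1; ring
  have hSm : QCommute ((q : ℂ) ^ 4) (R2 * (Xi * Xi)) (Xm * Xi) := by
    convert QCommute.mul_sq_mul_inv hRm hRi him using 1; ring
  have hMP : Xm * Xp * (Xi * Xi) - Xp * Xm * (Xi * Xi) = (lam : ℂ) • 1 := by
    rw [← sub_mul, h3, smul_mul_assoc, mul_self_mul_mul_self_eq_one h5]
  have hS : R2 * (Xi * Xi) =
      1 - (q : ℂ) • (Xp * Xm * (Xi * Xi)) - (q : ℂ)⁻¹ • (Xm * Xp * (Xi * Xi)) := by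
    rw [hR, sub_mul, sub_mul, mul_self_mul_mul_self_eq_one h5, smul_mul_assoc, smul_mul_assoc]
  have hab := suq2_coeff_mul hq0 hlam0
  subst htp htm ht3
  rw [Complex.ofReal_inv]
  exact ⟨suq2_rel_tp_tm hqC hlamC hlamC0 (by exact_mod_cast hab) him.mul_inv_mul_mul_inv
      hip.mul_inv_mul_mul_inv hMP hS,
    suq2_rel_t3_tp hqC hlamC hlamC0 (hSp.smul_right _),
    suq2_rel_tm_t3 hqC hlamC hlamC0 (hSm.smul_right _)⟩

/-- In ℝ³_q localized at X³ (with central R² = X³X³ − qX⁺X⁻ − q⁻¹X⁻X⁺),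
the elements t⁺ = −(λq³)⁻¹√(1+q²)X⁺(X³)⁻¹, t⁻ = (q²/λ)√(1+q²)X⁻(X³)⁻¹,
t³ = λ⁻¹(1 + R²(X³)⁻²) satisfy the su_q(2) relations. -/
theorem stmt1 (q lam : ℝ) (hq : 1 < q) (hlam : lam = q - q⁻¹)
    (A : Type*) [Ring A] [Algebra ℂ A] (Xp Xm X3 Xi R2 tp tm t3 : A)
    (h1 : X3 * Xp = ((q : ℂ) ^ 2) • (Xp * X3))
    (h2 : X3 * Xm = ((q : ℂ) ^ 2)⁻¹ • (Xm * X3))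
    (h3 : Xm * Xp - Xp * Xm = (lam : ℂ) • (X3 * X3))
    (h4 : Xi * X3 = 1) (h5 : X3 * Xi = 1)
    (hR : R2 = X3 * X3 - (q : ℂ) • (Xp * Xm) - (q : ℂ)⁻¹ • (Xm * Xp))
    (hRp : Commute R2 Xp) (hRm : Commute R2 Xm) (hR3 : Commute R2 X3)
    (hRi : Commute R2 Xi)
    (htp : tp = ((-(lam * q ^ 3)⁻¹ * Real.sqrt (1 + q ^ 2) : ℝ) : ℂ) • (Xp * Xi))
    (htm : tm = (((q ^ 2 / lam) * Real.sqrt (1 + q ^ 2) : ℝ) : ℂ) • (Xm * Xi))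
    (ht3 : t3 = ((lam⁻¹ : ℝ) : ℂ) • (1 + R2 * (Xi * Xi))) :
    (q : ℂ)⁻¹ • (tp * tm) - (q : ℂ) • (tm * tp) = t3 ∧
    (q : ℂ) ^ 2 • (t3 * tp) - ((q : ℂ) ^ 2)⁻¹ • (tp * t3) = ((q : ℂ) + (q : ℂ)⁻¹) • tp ∧
    (q : ℂ) ^ 2 • (tm * t3) - ((q : ℂ) ^ 2)⁻¹ • (t3 * tm) = ((q : ℂ) + (q : ℂ)⁻¹) • tm :=
  stmt1_general q lam hq hlam A Xp Xm X3 Xi R2 tp tm t3 h1 h2 h3 h4 h5 hR hRp hRm hRi htp htm ht3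
end

section
/- With t⁺, t⁻, t³ defined as above and τ_t = 1 − λt³, one has the identities τ_t = −R²(X³)⁻², t⁺t⁻ = −λ⁻²(1 + q²τ_t), and t⁻t⁺ = −λ⁻²(1 + q⁻²τ_t) in the localized quantum space algebra. -/
/-!
Conjugation by `X³` rescales `X±` by `q^{±2}`, so `t⁺t⁻` and `t⁻t⁺` are scalar multiples of
`P = X⁺X⁻(X³)⁻²` and of `X⁻X⁺(X³)⁻² = P + λ` respectively, while the defining relation of `R²`
gives `τ_t = (q + q⁻¹)P - q⁻²`. All three identities are then identities between scalars, which
reduce to `λq = q² - 1` and `(√(1+q²))² = 1 + q²`.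
-/

section Conjugation

variable {𝕜 A : Type*} [Semifield 𝕜] [Semiring A] [Algebra 𝕜 A] {x xi y : A} {c : 𝕜}

theorem inv_mul_eq_inv_smul_mul_inv (hc : c ≠ 0) (hl : xi * x = 1) (hr : x * xi = 1)
    (h : x * y = c • (y * x)) : xi * y = c⁻¹ • (y * xi) := by
  rw [eq_inv_smul_iff₀ hc]
  calc c • (xi * y) = xi * (c • (y * x)) * xi := by
        rw [mul_smul_comm, smul_mul_assoc, mul_assoc xi, mul_assoc y, hr, mul_one]
    _ = y * xi := by rw [← h, ← mul_assoc, hl, one_mul]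

theorem mul_inv_mul_mul_inv_eq_inv_smul (hc : c ≠ 0) (hl : xi * x = 1) (hr : x * xi = 1)
    (z : A) (h : x * y = c • (y * x)) : z * xi * (y * xi) = c⁻¹ • (z * y * (xi * xi)) := by
  rw [mul_assoc z, ← mul_assoc xi, inv_mul_eq_inv_smul_mul_inv hc hl hr h, smul_mul_assoc,
    mul_smul_comm, mul_assoc z, mul_assoc y]

theorem mul_mul_inv_mul_inv (hr : x * xi = 1) : x * x * (xi * xi) = 1 := by
  rw [mul_assoc, ← mul_assoc x xi, hr, one_mul, hr]

end Conjugation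

section QuantumSpace

variable {𝕜 A : Type*} [Ring A] {Xp Xm X3 Xi : A} {lam : 𝕜}

theorem mul_mul_inv_sq_of_commutator [CommSemiring 𝕜] [Algebra 𝕜 A] (hr : X3 * Xi = 1)
    (h : Xm * Xp - Xp * Xm = lam • (X3 * X3)) :
    Xm * Xp * (Xi * Xi) = Xp * Xm * (Xi * Xi) + lam • 1 := by
  rw [← mul_mul_inv_mul_inv hr, ← smul_mul_assoc, ← h, ← add_mul, add_sub_cancel]

theorem casimir_mul_inv_sq [Field 𝕜] [Algebra 𝕜 A] (q : 𝕜) (hr : X3 * Xi = 1)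
    (h : Xm * Xp - Xp * Xm = lam • (X3 * X3)) :
    (X3 * X3 - q • (Xp * Xm) - q⁻¹ • (Xm * Xp)) * (Xi * Xi) =
      (1 - q⁻¹ * lam) • 1 - (q + q⁻¹) • (Xp * Xm * (Xi * Xi)) := by
  rw [sub_mul, sub_mul, mul_mul_inv_mul_inv hr, smul_mul_assoc, smul_mul_assoc,
    mul_assoc Xp, mul_assoc Xm, ← mul_assoc Xp, ← mul_assoc Xm,
    mul_mul_inv_sq_of_commutator hr h]
  module

end QuantumSpace

/-- With t⁺, t⁻, t³ as in the homomorphism into the localized quantum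
space algebra and τ_t = 1 − λt³, one has τ_t = −R²(X³)⁻², t⁺t⁻ = −λ⁻²(1 + q²τ_t),
and t⁻t⁺ = −λ⁻²(1 + q⁻²τ_t). -/
theorem stmt2 (q lam : ℝ) (hq : 1 < q) (hlam : lam = q - q⁻¹)
    (A : Type*) [Ring A] [Algebra ℂ A] (Xp Xm X3 Xi R2 tp tm t3 tau : A)
    (h1 : X3 * Xp = ((q : ℂ) ^ 2) • (Xp * X3))
    (h2 : X3 * Xm = ((q : ℂ) ^ 2)⁻¹ • (Xm * X3))
    (h3 : Xm * Xp - Xp * Xm = (lam : ℂ) • (X3 * X3))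
    (h4 : Xi * X3 = 1) (h5 : X3 * Xi = 1)
    (hR : R2 = X3 * X3 - (q : ℂ) • (Xp * Xm) - (q : ℂ)⁻¹ • (Xm * Xp))
    (htp : tp = ((-(lam * q ^ 3)⁻¹ * Real.sqrt (1 + q ^ 2) : ℝ) : ℂ) • (Xp * Xi))
    (htm : tm = (((q ^ 2 / lam) * Real.sqrt (1 + q ^ 2) : ℝ) : ℂ) • (Xm * Xi))
    (ht3 : t3 = ((lam⁻¹ : ℝ) : ℂ) • (1 + R2 * (Xi * Xi)))
    (htau : tau = 1 - (lam : ℂ) • t3) :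
    tau = -(R2 * (Xi * Xi)) ∧
    tp * tm = (-(((lam : ℂ)) ^ 2)⁻¹) • (1 + ((q : ℂ) ^ 2) • tau) ∧
    tm * tp = (-(((lam : ℂ)) ^ 2)⁻¹) • (1 + ((q : ℂ) ^ 2)⁻¹ • tau) := by
  have hq0 : (q : ℂ) ≠ 0 := by exact_mod_cast (one_pos.trans hq).ne'
  have hlam0 : (lam : ℂ) ≠ 0 := by
    have : q⁻¹ < q := (inv_lt_one_of_one_lt₀ hq).trans hq
    exact_mod_cast (show 0 < lam by linarith).ne'
  have hlamq : (lam : ℂ) * q = q ^ 2 - 1 := by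
    rw [hlam]; push_cast; field_simp
  have hq2 : (q : ℂ) ^ 2 ≠ 0 := pow_ne_zero 2 hq0
  have hsqrt : ((Real.sqrt (1 + q ^ 2) : ℝ) : ℂ) ^ 2 = 1 + (q : ℂ) ^ 2 := by
    exact_mod_cast Real.sq_sqrt (by positivity : (0 : ℝ) ≤ 1 + q ^ 2)
  have hτ : tau = -(R2 * (Xi * Xi)) := by
    rw [htau, ht3, smul_smul, Complex.ofReal_inv, mul_inv_cancel₀ hlam0, one_smul]
    abel
  have hpm := mul_inv_mul_mul_inv_eq_inv_smul (inv_ne_zero hq2) h4 h5 Xp h2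
  have hmp := mul_inv_mul_mul_inv_eq_inv_smul hq2 h4 h5 Xm h1
  rw [mul_mul_inv_sq_of_commutator h5 h3] at hmp
  refine ⟨hτ, ?_, ?_⟩
  · rw [htp, htm, smul_mul_smul_comm, hpm, hτ, hR, casimir_mul_inv_sq _ h5 h3]
    push_cast
    match_scalars
    · field_simp
      linear_combination (-1 : ℂ) * hsqrt
    · field_simp
      linear_combination hlamq
  · rw [htp, htm, smul_mul_smul_comm, hmp, hτ, hR, casimir_mul_inv_sq _ h5 h3]
    push_cast
    match_scalars
    · field_simp
      linear_combination (-1 : ℂ) * hsqrt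
    · field_simp
      linear_combination (-lam : ℂ) * hsqrt - q * hlamq
end

section
/- Let q > 1, λ = q − q⁻¹. Define operators on the space of finitely supported functions ψ : ℤ≤0 → ℂ with basis {|m⟩ : m ≤ 0} by t³|m⟩ = λ⁻¹(1 + q²q^{−4m})|m⟩, t⁺|m⟩ = (λq)⁻¹√(q^{−4m} − 1)|m+1⟩ (with t⁺|0⟩ = 0), t⁻|m⟩ = (q/λ)√(q^{−4(m−1)} − 1)|m−1⟩. Then these operators satisfy q⁻¹t⁺t⁻ − qt⁻t⁺ = t³, q²t³t⁺ − q⁻²t⁺t³ = (q+q⁻¹)t⁺, q²t⁻t³ − q⁻²t³t⁻ = (q+q⁻¹)t⁻, and moreover t⁺t⁻ = −λ⁻²(1 + q²τ) and t⁻t⁺ = −λ⁻²(1 + q⁻²τ) where τ = 1 − λt³. -/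
noncomputable section

/-- The ℂ-vector space with basis {|m⟩ : m ∈ ℤ, m ≤ 0} (finitely supported functions). -/
abbrev VNeg : Type := {m : ℤ // m ≤ 0} →₀ ℂ

/-- t³|m⟩ = λ⁻¹(1 + q²q^{−4m})|m⟩ with λ = q − q⁻¹. -/
def t3Op (q : ℝ) : Module.End ℂ VNeg :=
  Finsupp.lsum ℂ fun m =>
    (((q - q⁻¹)⁻¹ * (1 + q ^ 2 * q ^ (-4 * m.1)) : ℝ) : ℂ) • Finsupp.lsingle m

/-- t⁺|m⟩ = (λq)⁻¹√(q^{−4m} − 1)|m+1⟩, with t⁺|0⟩ = 0. -/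
def tPlusOp (q : ℝ) : Module.End ℂ VNeg :=
  Finsupp.lsum ℂ fun m =>
    if h : m.1 < 0 then
      ((((q - q⁻¹) * q)⁻¹ * Real.sqrt (q ^ (-4 * m.1) - 1) : ℝ) : ℂ) •
        Finsupp.lsingle ⟨m.1 + 1, by omega⟩
    else 0

/-- t⁻|m⟩ = (q/λ)√(q^{−4(m−1)} − 1)|m−1⟩. -/
def tMinusOp (q : ℝ) : Module.End ℂ VNeg :=
  Finsupp.lsum ℂ fun m =>
    (((q / (q - q⁻¹)) * Real.sqrt (q ^ (-4 * (m.1 - 1)) - 1) : ℝ) : ℂ) •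
      Finsupp.lsingle ⟨m.1 - 1, by omega⟩

namespace Stmt6Aux

variable (q : ℝ)

lemma t3_single (m : {m : ℤ // m ≤ 0}) (b : ℂ) :
    t3Op q (Finsupp.single m b) =
      Finsupp.single m ((((q - q⁻¹)⁻¹ * (1 + q ^ 2 * q ^ (-4 * m.1)) : ℝ) : ℂ) * b) := by
  simp [t3Op, Finsupp.smul_single]

lemma tMinus_single (m : {m : ℤ // m ≤ 0}) (b : ℂ) :
    tMinusOp q (Finsupp.single m b) =
      Finsupp.single ⟨m.1 - 1, by omega⟩
        ((((q / (q - q⁻¹)) * Real.sqrt (q ^ (-4 * (m.1 - 1)) - 1) : ℝ) : ℂ) * b) := by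
  simp [tMinusOp, Finsupp.smul_single]

lemma tPlus_single (m : {m : ℤ // m ≤ 0}) (h : m.1 < 0) (b : ℂ) :
    tPlusOp q (Finsupp.single m b) =
      Finsupp.single ⟨m.1 + 1, by omega⟩
        (((((q - q⁻¹) * q)⁻¹ * Real.sqrt (q ^ (-4 * m.1) - 1) : ℝ) : ℂ) * b) := by
  simp [tPlusOp, Finsupp.smul_single, h]

lemma tPlus_single_zero (m : {m : ℤ // m ≤ 0}) (h : ¬ m.1 < 0) (b : ℂ) :
    tPlusOp q (Finsupp.single m b) = 0 := by
  simp [tPlusOp, h]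

variable (hq : 1 < q)
include hq

lemma q0 : q ≠ 0 := (lt_trans one_pos hq).ne'

lemma q20 : q ^ 2 - 1 ≠ 0 := by nlinarith

lemma lam_inv : (q - q⁻¹)⁻¹ = q / (q ^ 2 - 1) := by
  rw [show q - q⁻¹ = (q ^ 2 - 1) / q from by {field_simp}, inv_div]

lemma sqrt_sq {m : ℤ} (hm : m ≤ 0) :
    Real.sqrt (q ^ (-4 * m) - 1) * Real.sqrt (q ^ (-4 * m) - 1) = q ^ (-4 * m) - 1 :=
  Real.mul_self_sqrt (by linarith [one_le_zpow₀ hq.le (show (0:ℤ) ≤ -4 * m by omega)])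

lemma hxm (m : ℤ) : q ^ (-4 * (m - 1)) = q ^ 4 * q ^ (-4 * m) := by
  rw [show (-4 * (m - 1) : ℤ) = 4 + -4 * m by ring, zpow_add₀ (q0 q hq)]
  norm_cast

lemma hxp (m : ℤ) : q ^ (-4 * (m + 1)) = q ^ (-4 * m) / q ^ 4 := by
  rw [show (-4 * (m + 1) : ℤ) = -4 * m + -4 by ring, zpow_add₀ (q0 q hq)]
  rw [zpow_neg, div_eq_mul_inv]
  norm_cast

lemma tPlus_tMinus_single (m : {m : ℤ // m ≤ 0}) (b : ℂ) :
    tPlusOp q (tMinusOp q (Finsupp.single m b)) =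
      Finsupp.single m (((((q - q⁻¹)⁻¹) ^ 2 * (q ^ 4 * q ^ (-4 * m.1) - 1) : ℝ) : ℂ) * b) := by
  rw [tMinus_single, tPlus_single q _ (show m.1 - 1 < 0 by omega),
    show (⟨m.1 - 1 + 1, by omega⟩ : {m : ℤ // m ≤ 0}) = m from Subtype.ext (by ring)]
  simp only [show ((⟨m.1 - 1, by omega⟩ : {m : ℤ // m ≤ 0}).1) = m.1 - 1 from rfl]
  congr 1
  rw [← mul_assoc, ← Complex.ofReal_mul]
  congr 1
  rw [Complex.ofReal_inj]
  have hs := sqrt_sq q hq (show m.1 - 1 ≤ 0 by omega)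
  have h0 := q0 q hq
  have hi : q⁻¹ * q = 1 := inv_mul_cancel₀ h0
  rw [hxm q hq] at hs ⊢
  rw [mul_inv, div_eq_mul_inv]
  generalize (q - q⁻¹)⁻¹ = l
  generalize q⁻¹ = i at hi ⊢
  generalize q ^ (-4 * m.1) = x at hs ⊢
  linear_combination (l ^ 2 * (Real.sqrt (q ^ 4 * x - 1) * Real.sqrt (q ^ 4 * x - 1))) * hi +
    l ^ 2 * hs

lemma tMinus_tPlus_single (m : {m : ℤ // m ≤ 0}) (b : ℂ) :
    tMinusOp q (tPlusOp q (Finsupp.single m b)) =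
      Finsupp.single m (((((q - q⁻¹)⁻¹) ^ 2 * (q ^ (-4 * m.1) - 1) : ℝ) : ℂ) * b) := by
  by_cases h : m.1 < 0
  · rw [tPlus_single q _ h, tMinus_single,
      show (⟨m.1 + 1 - 1, by omega⟩ : {m : ℤ // m ≤ 0}) = m from Subtype.ext (by ring),
      show m.1 + 1 - 1 = m.1 by ring]
    congr 1
    rw [← mul_assoc, ← Complex.ofReal_mul]
    congr 1
    rw [Complex.ofReal_inj]
    have hs := sqrt_sq q hq m.2
    have h0 := q0 q hq
    have hi : q⁻¹ * q = 1 := inv_mul_cancel₀ h0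
    rw [mul_inv, div_eq_mul_inv]
    generalize (q - q⁻¹)⁻¹ = l
    generalize q⁻¹ = i at hi ⊢
    generalize q ^ (-4 * m.1) = x at hs ⊢
    linear_combination (l ^ 2 * (Real.sqrt (x - 1) * Real.sqrt (x - 1))) * hi + l ^ 2 * hs
  · have h0 : m.1 = 0 := by omega
    rw [tPlus_single_zero q _ h, map_zero, h0]
    norm_num

lemma lamq_inv : ((q - q⁻¹) * q)⁻¹ = 1 / (q ^ 2 - 1) := by
  have h0 := q0 q hq
  rw [show (q - q⁻¹) * q = q ^ 2 - 1 from by {field_simp}]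
  exact (one_div _).symm

lemma qdiv_lam : q / (q - q⁻¹) = q ^ 2 / (q ^ 2 - 1) := by
  have h0 := q0 q hq
  have h2 := q20 q hq
  rw [div_eq_mul_inv, lam_inv q hq]
  field_simp

lemma rkey1 (x : ℝ) :
    q⁻¹ * ((q - q⁻¹)⁻¹ ^ 2 * (q ^ 4 * x - 1)) - q * ((q - q⁻¹)⁻¹ ^ 2 * (x - 1)) =
      (q - q⁻¹)⁻¹ * (1 + q ^ 2 * x) := by
  have h0 := q0 q hq
  have h2 := q20 q hq
  rw [lam_inv q hq]
  field_simp
  ring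

lemma rkey2 (x s : ℝ) :
    q ^ 2 * ((q - q⁻¹)⁻¹ * (1 + q ^ 2 * (x / q ^ 4)) * (((q - q⁻¹) * q)⁻¹ * s)) -
        (q ^ 2)⁻¹ * (((q - q⁻¹) * q)⁻¹ * s * ((q - q⁻¹)⁻¹ * (1 + q ^ 2 * x))) =
      (q + q⁻¹) * (((q - q⁻¹) * q)⁻¹ * s) := by
  have h0 := q0 q hq
  have h2 := q20 q hq
  rw [lam_inv q hq, lamq_inv q hq]
  field_simp
  ring

lemma rkey3 (x s : ℝ) :
    q ^ 2 * (q / (q - q⁻¹) * s * ((q - q⁻¹)⁻¹ * (1 + q ^ 2 * x))) -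
        (q ^ 2)⁻¹ * ((q - q⁻¹)⁻¹ * (1 + q ^ 2 * (q ^ 4 * x)) * (q / (q - q⁻¹) * s)) =
      (q + q⁻¹) * (q / (q - q⁻¹) * s) := by
  have h0 := q0 q hq
  have h2 := q20 q hq
  rw [lam_inv q hq, qdiv_lam q hq]
  field_simp
  ring

lemma rkey4 (x : ℝ) :
    (q - q⁻¹)⁻¹ ^ 2 * (q ^ 4 * x - 1) =
      -(((q - q⁻¹) ^ 2)⁻¹) *
        (1 + q ^ 2 * (1 - (q - q⁻¹) * ((q - q⁻¹)⁻¹ * (1 + q ^ 2 * x)))) := by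
  have h0 := q0 q hq
  have h2 := q20 q hq
  rw [← inv_pow, lam_inv q hq]
  field_simp
  ring

lemma rkey5 (x : ℝ) :
    (q - q⁻¹)⁻¹ ^ 2 * (x - 1) =
      -(((q - q⁻¹) ^ 2)⁻¹) *
        (1 + (q ^ 2)⁻¹ * (1 - (q - q⁻¹) * ((q - q⁻¹)⁻¹ * (1 + q ^ 2 * x)))) := by
  have h0 := q0 q hq
  have h2 := q20 q hq
  rw [← inv_pow, lam_inv q hq]
  field_simp
  ring

end Stmt6Aux

open Stmt6Aux in
/-- the operators t³, t⁺, t⁻ satisfy the su_q(2) relations, and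
t⁺t⁻ = −λ⁻²(1 + q²τ), t⁻t⁺ = −λ⁻²(1 + q⁻²τ) with τ = 1 − λt³. -/
theorem stmt6 (q : ℝ) (hq : 1 < q) :
    (q : ℂ)⁻¹ • (tPlusOp q * tMinusOp q) - (q : ℂ) • (tMinusOp q * tPlusOp q) = t3Op q ∧
    (q : ℂ) ^ 2 • (t3Op q * tPlusOp q) - ((q : ℂ) ^ 2)⁻¹ • (tPlusOp q * t3Op q) =
      ((q : ℂ) + (q : ℂ)⁻¹) • tPlusOp q ∧
    (q : ℂ) ^ 2 • (tMinusOp q * t3Op q) - ((q : ℂ) ^ 2)⁻¹ • (t3Op q * tMinusOp q) =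
      ((q : ℂ) + (q : ℂ)⁻¹) • tMinusOp q ∧
    tPlusOp q * tMinusOp q =
      (-(((q : ℂ) - (q : ℂ)⁻¹) ^ 2)⁻¹) •
        (1 + ((q : ℂ) ^ 2) • (1 - ((q : ℂ) - (q : ℂ)⁻¹) • t3Op q)) ∧
    tMinusOp q * tPlusOp q =
      (-(((q : ℂ) - (q : ℂ)⁻¹) ^ 2)⁻¹) •
        (1 + ((q : ℂ) ^ 2)⁻¹ • (1 - ((q : ℂ) - (q : ℂ)⁻¹) • t3Op q)) := by
  refine ⟨?_, ?_, ?_, ?_, ?_⟩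
  · apply Finsupp.lhom_ext; intro m b
    simp only [LinearMap.sub_apply, LinearMap.smul_apply, Module.End.mul_apply]
    rw [tPlus_tMinus_single q hq, tMinus_tPlus_single q hq, t3_single,
      Finsupp.smul_single, Finsupp.smul_single, ← Finsupp.single_sub]
    congr 1
    simp only [smul_eq_mul]
    have key : (q : ℂ)⁻¹ * ((((q - q⁻¹)⁻¹) ^ 2 * (q ^ 4 * q ^ (-4 * m.1) - 1) : ℝ) : ℂ) -
        (q : ℂ) * ((((q - q⁻¹)⁻¹) ^ 2 * (q ^ (-4 * m.1) - 1) : ℝ) : ℂ) =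
        (((q - q⁻¹)⁻¹ * (1 + q ^ 2 * q ^ (-4 * m.1)) : ℝ) : ℂ) := by
      exact_mod_cast congrArg (Complex.ofReal) (rkey1 q hq (q ^ (-4 * m.1)))
    linear_combination b * key
  · apply Finsupp.lhom_ext; intro m b
    simp only [LinearMap.sub_apply, LinearMap.smul_apply, Module.End.mul_apply]
    by_cases h : m.1 < 0
    · rw [tPlus_single q m h, t3_single, t3_single, tPlus_single q m h,
        Finsupp.smul_single, Finsupp.smul_single, Finsupp.smul_single, ← Finsupp.single_sub]
      simp only [show ((⟨m.1 + 1, by omega⟩ : {m : ℤ // m ≤ 0}).1) = m.1 + 1 from rfl]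
      congr 1
      simp only [smul_eq_mul]
      have key : (q : ℂ) ^ 2 * ((((q - q⁻¹)⁻¹ * (1 + q ^ 2 * q ^ (-4 * (m.1 + 1))) : ℝ) : ℂ) *
            (((((q - q⁻¹) * q)⁻¹ * Real.sqrt (q ^ (-4 * m.1) - 1)) : ℝ) : ℂ)) -
          ((q : ℂ) ^ 2)⁻¹ * ((((((q - q⁻¹) * q)⁻¹ * Real.sqrt (q ^ (-4 * m.1) - 1)) : ℝ) : ℂ) *
            ((((q - q⁻¹)⁻¹ * (1 + q ^ 2 * q ^ (-4 * m.1))) : ℝ) : ℂ)) =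
          ((q : ℂ) + (q : ℂ)⁻¹) *
            (((((q - q⁻¹) * q)⁻¹ * Real.sqrt (q ^ (-4 * m.1) - 1)) : ℝ) : ℂ) := by
        have r := rkey2 q hq (q ^ (-4 * m.1)) (Real.sqrt (q ^ (-4 * m.1) - 1))
        rw [← hxp q hq] at r
        exact_mod_cast congrArg (Complex.ofReal) r
      linear_combination b * key
    · rw [t3_single, tPlus_single_zero q m h, tPlus_single_zero q m h, map_zero]
      simp
  · apply Finsupp.lhom_ext; intro m b
    simp only [LinearMap.sub_apply, LinearMap.smul_apply, Module.End.mul_apply]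
    rw [t3_single, tMinus_single, tMinus_single, t3_single,
      Finsupp.smul_single, Finsupp.smul_single, Finsupp.smul_single, ← Finsupp.single_sub]
    simp only [show ((⟨m.1 - 1, by omega⟩ : {m : ℤ // m ≤ 0}).1) = m.1 - 1 from rfl]
    congr 1
    simp only [smul_eq_mul]
    have key : (q : ℂ) ^ 2 * (((q / (q - q⁻¹) * Real.sqrt (q ^ (-4 * (m.1 - 1)) - 1) : ℝ) : ℂ) *
          ((((q - q⁻¹)⁻¹ * (1 + q ^ 2 * q ^ (-4 * m.1))) : ℝ) : ℂ)) -
        ((q : ℂ) ^ 2)⁻¹ * (((((q - q⁻¹)⁻¹ * (1 + q ^ 2 * q ^ (-4 * (m.1 - 1)))) : ℝ) : ℂ) *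
          ((q / (q - q⁻¹) * Real.sqrt (q ^ (-4 * (m.1 - 1)) - 1) : ℝ) : ℂ)) =
        ((q : ℂ) + (q : ℂ)⁻¹) *
          ((q / (q - q⁻¹) * Real.sqrt (q ^ (-4 * (m.1 - 1)) - 1) : ℝ) : ℂ) := by
      have r := rkey3 q hq (q ^ (-4 * m.1)) (Real.sqrt (q ^ (-4 * (m.1 - 1)) - 1))
      rw [← hxm q hq] at r
      exact_mod_cast congrArg (Complex.ofReal) r
    linear_combination b * key
  · apply Finsupp.lhom_ext; intro m b
    simp only [Module.End.mul_apply, LinearMap.smul_apply, LinearMap.add_apply,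
      LinearMap.sub_apply, Module.End.one_apply]
    rw [tPlus_tMinus_single q hq, t3_single]
    simp only [Finsupp.smul_single, ← Finsupp.single_sub, ← Finsupp.single_add]
    congr 1
    simp only [smul_eq_mul]
    have key : ((((q - q⁻¹)⁻¹) ^ 2 * (q ^ 4 * q ^ (-4 * m.1) - 1) : ℝ) : ℂ) =
        -((((q : ℂ) - (q : ℂ)⁻¹) ^ 2)⁻¹) * (1 + (q : ℂ) ^ 2 * (1 - ((q : ℂ) - (q : ℂ)⁻¹) *
          ((((q - q⁻¹)⁻¹ * (1 + q ^ 2 * q ^ (-4 * m.1))) : ℝ) : ℂ))) := by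
      exact_mod_cast congrArg (Complex.ofReal) (rkey4 q hq (q ^ (-4 * m.1)))
    linear_combination b * key
  · apply Finsupp.lhom_ext; intro m b
    simp only [Module.End.mul_apply, LinearMap.smul_apply, LinearMap.add_apply,
      LinearMap.sub_apply, Module.End.one_apply]
    rw [tMinus_tPlus_single q hq, t3_single]
    simp only [Finsupp.smul_single, ← Finsupp.single_sub, ← Finsupp.single_add]
    congr 1
    simp only [smul_eq_mul]
    have key : ((((q - q⁻¹)⁻¹) ^ 2 * (q ^ (-4 * m.1) - 1) : ℝ) : ℂ) =
        -((((q : ℂ) - (q : ℂ)⁻¹) ^ 2)⁻¹) * (1 + ((q : ℂ) ^ 2)⁻¹ * (1 - ((q : ℂ) - (q : ℂ)⁻¹) *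
          ((((q - q⁻¹)⁻¹ * (1 + q ^ 2 * q ^ (-4 * m.1))) : ℝ) : ℂ))) := by
      exact_mod_cast congrArg (Complex.ofReal) (rkey5 q hq (q ^ (-4 * m.1)))
    linear_combination b * key

end
end

section
/- Let q > 1, λ = q − q⁻¹. Define operators on the ℂ-vector space with basis {|m⟩ : m ∈ ℤ, m ≥ 0} by K³|m⟩ = λ⁻¹(1 + q⁻²q^{−4m})|m⟩, K⁺|m⟩ = (qλ)⁻¹√(1 − q^{−4(m+1)})|m+1⟩, K⁻|m⟩ = −(q/λ)√(1 − q^{−4m})|m−1⟩ (so K⁻|0⟩ = 0). Then q⁻¹K⁺K⁻ − qK⁻K⁺ = K³, q²K³K⁺ − q⁻²K⁺K³ = (q+q⁻¹)K⁺, and q²K⁻K³ − q⁻²K³K⁻ = (q+q⁻¹)K⁻. -/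
noncomputable section

/-- The ℂ-vector space with basis {|m⟩ : m ∈ ℤ, m ≥ 0}. -/
abbrev VPos : Type := {m : ℤ // 0 ≤ m} →₀ ℂ

/-- K³|m⟩ = λ⁻¹(1 + q⁻²q^{−4m})|m⟩ with λ = q − q⁻¹. -/
def K3Op (q : ℝ) : Module.End ℂ VPos :=
  Finsupp.lsum ℂ fun m =>
    (((q - q⁻¹)⁻¹ * (1 + (q ^ 2)⁻¹ * q ^ (-4 * m.1)) : ℝ) : ℂ) • Finsupp.lsingle m

/-- K⁺|m⟩ = (qλ)⁻¹√(1 − q^{−4(m+1)})|m+1⟩. -/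
def KPlusOp (q : ℝ) : Module.End ℂ VPos :=
  Finsupp.lsum ℂ fun m =>
    (((q * (q - q⁻¹))⁻¹ * Real.sqrt (1 - q ^ (-4 * (m.1 + 1))) : ℝ) : ℂ) •
      Finsupp.lsingle ⟨m.1 + 1, by omega⟩

/-- K⁻|m⟩ = −(q/λ)√(1 − q^{−4m})|m−1⟩, with K⁻|0⟩ = 0. -/
def KMinusOp (q : ℝ) : Module.End ℂ VPos :=
  Finsupp.lsum ℂ fun m =>
    if h : 0 < m.1 then
      ((-(q / (q - q⁻¹)) * Real.sqrt (1 - q ^ (-4 * m.1)) : ℝ) : ℂ) •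
        Finsupp.lsingle ⟨m.1 - 1, by omega⟩
    else 0

lemma K3_apply (q : ℝ) (a : {m : ℤ // 0 ≤ m}) (b : ℂ) :
    K3Op q (Finsupp.single a b)
      = (((q - q⁻¹)⁻¹ * (1 + (q ^ 2)⁻¹ * q ^ (-4 * a.1)) : ℝ) : ℂ) • Finsupp.single a b := by
  simp [K3Op]

lemma KPlus_apply (q : ℝ) (a a' : {m : ℤ // 0 ≤ m}) (h : a'.1 = a.1 + 1) (b : ℂ) :
    KPlusOp q (Finsupp.single a b)
      = (((q * (q - q⁻¹))⁻¹ * Real.sqrt (1 - q ^ (-4 * (a.1 + 1))) : ℝ) : ℂ) •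
        Finsupp.single a' b := by
  simp only [KPlusOp, Finsupp.lsum_single, LinearMap.smul_apply, Finsupp.lsingle_apply]
  congr 2
  exact Subtype.ext h.symm

lemma KMinus_apply_pos (q : ℝ) (a a' : {m : ℤ // 0 ≤ m}) (h : a.1 = a'.1 + 1) (b : ℂ) :
    KMinusOp q (Finsupp.single a b)
      = ((-(q / (q - q⁻¹)) * Real.sqrt (1 - q ^ (-4 * a.1)) : ℝ) : ℂ) • Finsupp.single a' b := by
  simp only [KMinusOp, Finsupp.lsum_single]
  rw [dif_pos (show 0 < a.1 by omega)]
  simp only [LinearMap.smul_apply, Finsupp.lsingle_apply]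
  congr 2
  exact Subtype.ext (show a.1 - 1 = a'.1 by omega)

lemma KMinus_apply_zero (q : ℝ) (a : {m : ℤ // 0 ≤ m}) (h : a.1 = 0) (b : ℂ) :
    KMinusOp q (Finsupp.single a b) = 0 := by
  simp only [KMinusOp, Finsupp.lsum_single]
  rw [dif_neg (by omega)]
  rfl

variable {q : ℝ}

lemma hq0 (hq : 1 < q) : (0:ℝ) < q := lt_trans one_pos hq

lemma hlam (hq : 1 < q) : (0:ℝ) < q - q⁻¹ := by
  have := hq0 hq
  have h1 : q⁻¹ < 1 := inv_lt_one_of_one_lt₀ hq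
  linarith

lemma hx_le_one (hq : 1 < q) {n : ℤ} (hn : 0 ≤ n) : q ^ (-4 * n) ≤ 1 :=
  zpow_le_one_of_nonpos₀ hq.le (by omega)

lemma hx_pos (hq : 1 < q) (n : ℤ) : (0:ℝ) < q ^ (-4 * n) := zpow_pos (hq0 hq) _

lemma hshift (hq : 1 < q) (n : ℤ) : q ^ (-4 * (n + 1)) = q⁻¹ ^ 4 * q ^ (-4 * n) := by
  rw [show -4 * (n + 1) = (-4) + -4 * n by ring, zpow_add₀ (hq0 hq).ne']
  congr 1
  rw [zpow_neg, ← inv_zpow]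
  norm_cast

lemma hshift' (hq : 1 < q) (n : ℤ) : q ^ (-4 * (n - 1)) = q ^ 4 * q ^ (-4 * n) := by
  rw [show -4 * (n - 1) = 4 + -4 * n by ring, zpow_add₀ (hq0 hq).ne']
  norm_cast

lemma key1x (hq : 1 < q) (x : ℝ) (hx0 : 0 ≤ x) (hx1 : x ≤ 1) :
    q⁻¹ * (((q * (q - q⁻¹))⁻¹ * Real.sqrt (1 - x)) * (-(q / (q - q⁻¹)) * Real.sqrt (1 - x))) -
      q * ((-(q / (q - q⁻¹)) * Real.sqrt (1 - q⁻¹ ^ 4 * x)) *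
        ((q * (q - q⁻¹))⁻¹ * Real.sqrt (1 - q⁻¹ ^ 4 * x))) =
      (q - q⁻¹)⁻¹ * (1 + (q ^ 2)⁻¹ * x) := by
  have h0 := hq0 hq
  have hl := hlam hq
  have hA : (0:ℝ) ≤ 1 - x := by linarith
  have hq4 : (0:ℝ) < q⁻¹ ^ 4 := by positivity
  have hq4' : q⁻¹ ^ 4 ≤ 1 := by
    rw [inv_pow, inv_le_one_iff₀]
    right
    nlinarith [sq_nonneg (q ^ 2 - 1), sq_nonneg (q - 1), hq0 hq]
  have hB : (0:ℝ) ≤ 1 - q⁻¹ ^ 4 * x := by nlinarith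
  have hqi : q * q⁻¹ = 1 := mul_inv_cancel₀ h0.ne'
  have hli : (q - q⁻¹) * (q - q⁻¹)⁻¹ = 1 := mul_inv_cancel₀ hl.ne'
  have hsA : Real.sqrt (1 - x) * Real.sqrt (1 - x) = 1 - x := Real.mul_self_sqrt hA
  have hsB : Real.sqrt (1 - q⁻¹ ^ 4 * x) * Real.sqrt (1 - q⁻¹ ^ 4 * x) = 1 - q⁻¹ ^ 4 * x :=
    Real.mul_self_sqrt hB
  rw [mul_inv, div_eq_mul_inv, ← inv_pow]
  linear_combination
    (q⁻¹ * ((q - q⁻¹)⁻¹) ^ 2 * (-1 + x - q⁻¹ ^ 2 * x * (q * q⁻¹ + 1)) + (q - q⁻¹)⁻¹ +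
      q⁻¹ * ((q - q⁻¹)⁻¹) ^ 2 * (1 - x)) * hqi +
    (q⁻¹ * (q - q⁻¹)⁻¹ * (q + x * q⁻¹)) * hli +
    (-q * q⁻¹ ^ 2 * ((q - q⁻¹)⁻¹) ^ 2) * hsA +
    (q ^ 2 * q⁻¹ * ((q - q⁻¹)⁻¹) ^ 2) * hsB

lemma key1 (hq : 1 < q) (n : ℤ) (hn : 0 ≤ n) :
    q⁻¹ * (((q * (q - q⁻¹))⁻¹ * Real.sqrt (1 - q ^ (-4 * n))) *
        (-(q / (q - q⁻¹)) * Real.sqrt (1 - q ^ (-4 * n)))) -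
      q * ((-(q / (q - q⁻¹)) * Real.sqrt (1 - q ^ (-4 * (n + 1)))) *
        ((q * (q - q⁻¹))⁻¹ * Real.sqrt (1 - q ^ (-4 * (n + 1))))) =
      (q - q⁻¹)⁻¹ * (1 + (q ^ 2)⁻¹ * q ^ (-4 * n)) := by
  rw [hshift hq n]
  exact key1x hq _ (hx_pos hq n).le (hx_le_one hq hn)

lemma key1z (hq : 1 < q) (n : ℤ) (hn : n = 0) :
    -(q * ((-(q / (q - q⁻¹)) * Real.sqrt (1 - q ^ (-4 * (n + 1)))) *
        ((q * (q - q⁻¹))⁻¹ * Real.sqrt (1 - q ^ (-4 * (n + 1)))))) =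
      (q - q⁻¹)⁻¹ * (1 + (q ^ 2)⁻¹ * q ^ (-4 * n)) := by
  subst hn
  have K := key1 hq 0 le_rfl
  rw [show (-4 * (0:ℤ)) = 0 by ring, zpow_zero] at K ⊢
  rw [sub_self, Real.sqrt_zero] at K
  linear_combination K

lemma key2x (hq : 1 < q) (x s : ℝ) :
    q ^ 2 * ((q - q⁻¹)⁻¹ * (1 + (q ^ 2)⁻¹ * (q⁻¹ ^ 4 * x)) * ((q * (q - q⁻¹))⁻¹ * s)) -
      (q ^ 2)⁻¹ * ((q * (q - q⁻¹))⁻¹ * s * ((q - q⁻¹)⁻¹ * (1 + (q ^ 2)⁻¹ * x))) =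
      (q + q⁻¹) * ((q * (q - q⁻¹))⁻¹ * s) := by
  have h0 := hq0 hq
  have hl := hlam hq
  have hqi : q * q⁻¹ = 1 := mul_inv_cancel₀ h0.ne'
  have hli : (q - q⁻¹) * (q - q⁻¹)⁻¹ = 1 := mul_inv_cancel₀ hl.ne'
  rw [mul_inv, ← inv_pow]
  linear_combination (q⁻¹ ^ 5 * ((q - q⁻¹)⁻¹) ^ 2 * s * x * (q * q⁻¹ + 1)) * hqi +
    (q⁻¹ * (q - q⁻¹)⁻¹ * s * (q + q⁻¹)) * hli

lemma key2 (hq : 1 < q) (n : ℤ) (s : ℝ) :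
    q ^ 2 * ((q - q⁻¹)⁻¹ * (1 + (q ^ 2)⁻¹ * q ^ (-4 * (n + 1))) * ((q * (q - q⁻¹))⁻¹ * s)) -
      (q ^ 2)⁻¹ * ((q * (q - q⁻¹))⁻¹ * s * ((q - q⁻¹)⁻¹ * (1 + (q ^ 2)⁻¹ * q ^ (-4 * n)))) =
      (q + q⁻¹) * ((q * (q - q⁻¹))⁻¹ * s) := by
  rw [hshift hq n]
  exact key2x hq _ _

lemma key3x (hq : 1 < q) (x s : ℝ) :
    q ^ 2 * ((q - q⁻¹)⁻¹ * (1 + (q ^ 2)⁻¹ * x) * (-(q / (q - q⁻¹)) * s)) -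
      (q ^ 2)⁻¹ * (-(q / (q - q⁻¹)) * s * ((q - q⁻¹)⁻¹ * (1 + (q ^ 2)⁻¹ * (q ^ 4 * x)))) =
      (q + q⁻¹) * (-(q / (q - q⁻¹)) * s) := by
  have h0 := hq0 hq
  have hl := hlam hq
  have hqi : q * q⁻¹ = 1 := mul_inv_cancel₀ h0.ne'
  have hli : (q - q⁻¹) * (q - q⁻¹)⁻¹ = 1 := mul_inv_cancel₀ hl.ne'
  rw [div_eq_mul_inv, ← inv_pow]
  linear_combination (q ^ 3 * q⁻¹ ^ 2 * ((q - q⁻¹)⁻¹) ^ 2 * s * x * (q * q⁻¹ + 1)) * hqi +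
    (-q * (q - q⁻¹)⁻¹ * s * (q + q⁻¹)) * hli

lemma key3 (hq : 1 < q) (n : ℤ) (s : ℝ) :
    q ^ 2 * ((q - q⁻¹)⁻¹ * (1 + (q ^ 2)⁻¹ * q ^ (-4 * n)) * (-(q / (q - q⁻¹)) * s)) -
      (q ^ 2)⁻¹ * (-(q / (q - q⁻¹)) * s * ((q - q⁻¹)⁻¹ * (1 + (q ^ 2)⁻¹ * q ^ (-4 * (n - 1))))) =
      (q + q⁻¹) * (-(q / (q - q⁻¹)) * s) := by
  rw [hshift' hq n]
  exact key3x hq _ _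

/-- the operators K³, K⁺, K⁻ satisfy the su_q(2)-type relations
q⁻¹K⁺K⁻ − qK⁻K⁺ = K³, q²K³K⁺ − q⁻²K⁺K³ = (q+q⁻¹)K⁺,
q²K⁻K³ − q⁻²K³K⁻ = (q+q⁻¹)K⁻. -/
theorem stmt7 (q : ℝ) (hq : 1 < q) :
    (q : ℂ)⁻¹ • (KPlusOp q * KMinusOp q) - (q : ℂ) • (KMinusOp q * KPlusOp q) = K3Op q ∧
    (q : ℂ) ^ 2 • (K3Op q * KPlusOp q) - ((q : ℂ) ^ 2)⁻¹ • (KPlusOp q * K3Op q) =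
      ((q : ℂ) + (q : ℂ)⁻¹) • KPlusOp q ∧
    (q : ℂ) ^ 2 • (KMinusOp q * K3Op q) - ((q : ℂ) ^ 2)⁻¹ • (K3Op q * KMinusOp q) =
      ((q : ℂ) + (q : ℂ)⁻¹) • KMinusOp q := by
  refine ⟨?_, ?_, ?_⟩
  · apply Finsupp.lhom_ext
    intro a b
    have ha := a.2
    simp only [LinearMap.sub_apply, LinearMap.smul_apply, Module.End.mul_apply]
    rcases eq_or_lt_of_le ha with h0 | hpos
    · rw [KMinus_apply_zero q a h0.symm b, map_zero, smul_zero,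
        KPlus_apply q a ⟨a.1 + 1, by omega⟩ rfl b, map_smul,
        KMinus_apply_pos q ⟨a.1 + 1, by omega⟩ a rfl b,
        K3_apply, smul_smul, smul_smul, zero_sub, ← neg_smul]
      congr 1
      have K' := congrArg Complex.ofReal (key1z hq a.1 h0.symm)
      push_cast at K' ⊢
      linear_combination K'
    · set a' : {m : ℤ // 0 ≤ m} := ⟨a.1 - 1, by omega⟩ with ha'
      have e : (a' : ℤ) = a.1 - 1 := by rw [ha']
      rw [KMinus_apply_pos q a a' (show a.1 = a'.1 + 1 by omega) b, map_smul,
        KPlus_apply q a' a (show a.1 = a'.1 + 1 by omega) b,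
        KPlus_apply q a ⟨a.1 + 1, by omega⟩ rfl b, map_smul,
        KMinus_apply_pos q ⟨a.1 + 1, by omega⟩ a rfl b,
        K3_apply, smul_smul, smul_smul, smul_smul, smul_smul, ← sub_smul]
      congr 1
      rw [show (a' : ℤ) + 1 = a.1 by omega]
      have K' := congrArg Complex.ofReal (key1 hq a.1 ha)
      push_cast at K' ⊢
      linear_combination K'
  · apply Finsupp.lhom_ext
    intro a b
    have ha := a.2
    simp only [LinearMap.sub_apply, LinearMap.smul_apply, Module.End.mul_apply]
    rw [K3_apply q a b, map_smul, KPlus_apply q a ⟨a.1 + 1, by omega⟩ rfl b, map_smul,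
      K3_apply q ⟨a.1 + 1, by omega⟩ b,
      smul_smul, smul_smul, smul_smul, smul_smul, ← sub_smul, smul_smul]
    congr 1
    have K' := congrArg Complex.ofReal (key2 hq a.1 (Real.sqrt (1 - q ^ (-4 * (a.1 + 1)))))
    push_cast at K' ⊢
    linear_combination K'
  · apply Finsupp.lhom_ext
    intro a b
    have ha := a.2
    simp only [LinearMap.sub_apply, LinearMap.smul_apply, Module.End.mul_apply]
    rcases eq_or_lt_of_le ha with h0 | hpos
    · rw [K3_apply q a b, map_smul, KMinus_apply_zero q a h0.symm b, map_zero, smul_zero,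
        smul_zero, smul_zero]
      simp
    · set a' : {m : ℤ // 0 ≤ m} := ⟨a.1 - 1, by omega⟩ with ha'
      have e : (a' : ℤ) = a.1 - 1 := by rw [ha']
      rw [K3_apply q a b, map_smul, KMinus_apply_pos q a a' (show a.1 = a'.1 + 1 by omega) b,
        map_smul, K3_apply q a' b,
        smul_smul, smul_smul, smul_smul, smul_smul, ← sub_smul, smul_smul]
      congr 1
      rw [e]
      have K' := congrArg Complex.ofReal (key3 hq a.1 (Real.sqrt (1 - q ^ (-4 * a.1))))
      push_cast at K' ⊢
      linear_combination K'

end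
end

section
/- Under the same hypotheses as the comultiplication lemma but with σ a formal sign (σ = ±1) and s₁ satisfying s₁² = −τ₁ = −(1 − λT³₁), s₁T⁺₁ = q⁻²T⁺₁s₁, s₁T⁻₁ = q²T⁻₁s₁, the elements Δ_β(T³) = T³₁ + τ₁T³₂, Δ_β(T⁺) = T⁺₁ + s₁T⁺₂, Δ_β(T⁻) = T⁻₁ − s₁T⁻₂ satisfy the su_q(2) relations q⁻¹Δ(T⁺)Δ(T⁻) − qΔ(T⁻)Δ(T⁺) = Δ(T³), q²Δ(T³)Δ(T⁺) − q⁻²Δ(T⁺)Δ(T³) = (q+q⁻¹)Δ(T⁺), q²Δ(T⁻)Δ(T³) − q⁻²Δ(T³)Δ(T⁻) = (q+q⁻¹)Δ(T⁻). -/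
/-- The su_q(2) relations for a triple (T³, T⁺, T⁻) in a ℂ-algebra A. -/
def SuQ2Rel {A : Type*} [Ring A] [Algebra ℂ A] (q : ℝ) (T3 Tp Tm : A) : Prop :=
  (q : ℂ)⁻¹ • (Tp * Tm) - (q : ℂ) • (Tm * Tp) = T3 ∧
  (q : ℂ) ^ 2 • (T3 * Tp) - ((q : ℂ) ^ 2)⁻¹ • (Tp * T3) = ((q : ℂ) + (q : ℂ)⁻¹) • Tp ∧
  (q : ℂ) ^ 2 • (Tm * T3) - ((q : ℂ) ^ 2)⁻¹ • (T3 * Tm) = ((q : ℂ) + (q : ℂ)⁻¹) • Tm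

private lemma solve_smul {A : Type*} [AddCommGroup A] [Module ℂ A] {c : ℂ} (hc : c ≠ 0)
    {x y : A} (h : c • x = y) : x = c⁻¹ • y := by
  rw [← h, smul_smul, inv_mul_cancel₀ hc, one_smul]

private lemma push_lem {A : Type*} [Ring A] {a b c : A} (h : a * b = c) (x : A) :
    a * (b * x) = c * x := by rw [← mul_assoc, h]

set_option maxHeartbeats 4000000 in
/-- modified comultiplication Δ_β. Under the same hypotheses as the
comultiplication lemma but with s₁² = −τ₁ = −(1 − λT³₁), the elements
Δ_β(T³) = T³₁ + τ₁T³₂, Δ_β(T⁺) = T⁺₁ + s₁T⁺₂, Δ_β(T⁻) = T⁻₁ − s₁T⁻₂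
satisfy the su_q(2) relations. -/
theorem stmt9 (q : ℝ) (hq : 1 < q)
    (A : Type*) [Ring A] [Algebra ℂ A]
    (T31 Tp1 Tm1 s1 T32 Tp2 Tm2 : A)
    (hrel1 : SuQ2Rel q T31 Tp1 Tm1) (hrel2 : SuQ2Rel q T32 Tp2 Tm2)
    (hs : s1 * s1 = -(1 - ((q : ℂ) - (q : ℂ)⁻¹) • T31))
    (hcomm : ∀ a ∈ ({T31, Tp1, Tm1, s1} : Set A), ∀ b ∈ ({T32, Tp2, Tm2} : Set A),
      Commute a b)
    (hsp : s1 * Tp1 = ((q : ℂ) ^ 2)⁻¹ • (Tp1 * s1))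
    (hsm : s1 * Tm1 = (q : ℂ) ^ 2 • (Tm1 * s1)) :
    SuQ2Rel q (T31 + (1 - ((q : ℂ) - (q : ℂ)⁻¹) • T31) * T32)
      (Tp1 + s1 * Tp2) (Tm1 - s1 * Tm2) := by
  obtain ⟨h11, h12, h13⟩ := hrel1
  obtain ⟨h21, h22, h23⟩ := hrel2
  have hqR : (q : ℝ) ≠ 0 := by linarith
  have hq0 : (q : ℂ) ≠ 0 := by exact_mod_cast hqR
  have hq2 : ((q : ℂ) ^ 2) ≠ 0 := pow_ne_zero _ hq0
  have hlR : (q : ℝ) - q⁻¹ ≠ 0 := by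
    have h1 : q⁻¹ < 1 := by rw [inv_lt_one_iff₀]; right; exact hq
    linarith
  have hl0 : ((q : ℂ) - (q : ℂ)⁻¹) ≠ 0 := by
    have : (((q - q⁻¹ : ℝ)) : ℂ) ≠ 0 := by exact_mod_cast hlR
    push_cast at this
    convert this using 2
  -- solved relation rewrite rules, copy 1
  have r1 : Tm1 * Tp1 = (q : ℂ)⁻¹ • ((q : ℂ)⁻¹ • (Tp1 * Tm1) - T31) :=
    solve_smul hq0 (by rw [← h11]; abel)
  have r2 : T31 * Tp1 = ((q : ℂ) ^ 2)⁻¹ •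
      (((q : ℂ) + (q : ℂ)⁻¹) • Tp1 + ((q : ℂ) ^ 2)⁻¹ • (Tp1 * T31)) :=
    solve_smul hq2 (by rw [← h12]; abel)
  have r3 : Tm1 * T31 = ((q : ℂ) ^ 2)⁻¹ •
      (((q : ℂ) + (q : ℂ)⁻¹) • Tm1 + ((q : ℂ) ^ 2)⁻¹ • (T31 * Tm1)) :=
    solve_smul hq2 (by rw [← h13]; abel)
  -- copy 2
  have r1' : Tm2 * Tp2 = (q : ℂ)⁻¹ • ((q : ℂ)⁻¹ • (Tp2 * Tm2) - T32) :=
    solve_smul hq0 (by rw [← h21]; abel)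
  have r2' : T32 * Tp2 = ((q : ℂ) ^ 2)⁻¹ •
      (((q : ℂ) + (q : ℂ)⁻¹) • Tp2 + ((q : ℂ) ^ 2)⁻¹ • (Tp2 * T32)) :=
    solve_smul hq2 (by rw [← h22]; abel)
  have r3' : Tm2 * T32 = ((q : ℂ) ^ 2)⁻¹ •
      (((q : ℂ) + (q : ℂ)⁻¹) • Tm2 + ((q : ℂ) ^ 2)⁻¹ • (T32 * Tm2)) :=
    solve_smul hq2 (by rw [← h23]; abel)
  -- s1 commutes with T31
  have cs3 : s1 * T31 = T31 * s1 := by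
    have h1 : s1 * (s1 * s1) = (s1 * s1) * s1 := (mul_assoc _ _ _).symm
    rw [hs] at h1
    have h2 : ((q : ℂ) - (q : ℂ)⁻¹) • (s1 * T31) = ((q : ℂ) - (q : ℂ)⁻¹) • (T31 * s1) := by
      have h3 : s1 - ((q : ℂ) - (q : ℂ)⁻¹) • (s1 * T31)
          = s1 - ((q : ℂ) - (q : ℂ)⁻¹) • (T31 * s1) := by
        have := h1
        simpa [mul_sub, sub_mul, mul_one, one_mul, mul_smul_comm, smul_mul_assoc,
          neg_mul, mul_neg, neg_inj] using this
      exact sub_right_injective h3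
    have := solve_smul hl0 h2
    rwa [smul_smul, inv_mul_cancel₀ hl0, one_smul] at this
  -- cross commutations
  have m1 : T31 ∈ ({T31, Tp1, Tm1, s1} : Set A) := by simp
  have m2 : Tp1 ∈ ({T31, Tp1, Tm1, s1} : Set A) := by simp
  have m3 : Tm1 ∈ ({T31, Tp1, Tm1, s1} : Set A) := by simp
  have m4 : s1 ∈ ({T31, Tp1, Tm1, s1} : Set A) := by simp
  have n1 : T32 ∈ ({T32, Tp2, Tm2} : Set A) := by simp
  have n2 : Tp2 ∈ ({T32, Tp2, Tm2} : Set A) := by simp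
  have n3 : Tm2 ∈ ({T32, Tp2, Tm2} : Set A) := by simp
  have c11 : T32 * T31 = T31 * T32 := ((hcomm _ m1 _ n1).symm).eq
  have c12 : Tp2 * T31 = T31 * Tp2 := ((hcomm _ m1 _ n2).symm).eq
  have c13 : Tm2 * T31 = T31 * Tm2 := ((hcomm _ m1 _ n3).symm).eq
  have c21 : T32 * Tp1 = Tp1 * T32 := ((hcomm _ m2 _ n1).symm).eq
  have c22 : Tp2 * Tp1 = Tp1 * Tp2 := ((hcomm _ m2 _ n2).symm).eq
  have c23 : Tm2 * Tp1 = Tp1 * Tm2 := ((hcomm _ m2 _ n3).symm).eq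
  have c31 : T32 * Tm1 = Tm1 * T32 := ((hcomm _ m3 _ n1).symm).eq
  have c32 : Tp2 * Tm1 = Tm1 * Tp2 := ((hcomm _ m3 _ n2).symm).eq
  have c33 : Tm2 * Tm1 = Tm1 * Tm2 := ((hcomm _ m3 _ n3).symm).eq
  have c41 : T32 * s1 = s1 * T32 := ((hcomm _ m4 _ n1).symm).eq
  have c42 : Tp2 * s1 = s1 * Tp2 := ((hcomm _ m4 _ n2).symm).eq
  have c43 : Tm2 * s1 = s1 * Tm2 := ((hcomm _ m4 _ n3).symm).eq
  refine ⟨?_, ?_, ?_⟩ <;>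
  · simp only [mul_add, add_mul, mul_sub, sub_mul, mul_one, one_mul, neg_mul, mul_neg,
      neg_neg, smul_mul_assoc, mul_smul_comm, smul_smul, smul_add, smul_sub, smul_neg,
      mul_assoc,
      r1, push_lem r1, r2, push_lem r2, r3, push_lem r3,
      r1', push_lem r1', r2', push_lem r2', r3', push_lem r3',
      hsp, push_lem hsp, hsm, push_lem hsm, hs, push_lem hs,
      cs3, push_lem cs3,
      c11, push_lem c11, c12, push_lem c12, c13, push_lem c13,
      c21, push_lem c21, c22, push_lem c22, c23, push_lem c23,
      c31, push_lem c31, c32, push_lem c32, c33, push_lem c33,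
      c41, push_lem c41, c42, push_lem c42, c43, push_lem c43]
    match_scalars <;> field_simp <;> ring
end

section
/- For q > 1 and integers 0 ≤ m ≤ l, the big q-Jacobi polynomials P^m_l satisfy the three-term recurrence x·q^m·[2l+1]·P^m_l(x) = q^l·[l+m+1]·P^m_{l+1}(x) + q^{−l−1}·[l−m]·P^m_{l−1}(x), where [a] = (q^a − q^{−a})/(q − q⁻¹) and P^m_{m−1} is interpreted as 0. -/
noncomputable section

/-- Symmetric q-number [a] = (q^a − q^{−a})/(q − q⁻¹). -/
def qNum (q : ℝ) (a : ℤ) : ℝ := (q ^ a - q ^ (-a)) / (q - q⁻¹)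

/-- Symmetric q-factorial [n]! = ∏_{k=1}^n [k]. -/
def qFact (q : ℝ) (n : ℕ) : ℝ := ∏ k ∈ Finset.range n, qNum q (k + 1)

/-- Symmetric q-binomial coefficient, zero unless 0 ≤ k ≤ n. -/
def qBinom (q : ℝ) (n k : ℤ) : ℝ :=
  if 0 ≤ k ∧ k ≤ n then qFact q n.toNat / (qFact q k.toNat * qFact q (n - k).toNat)
  else 0

/-- q-Pochhammer symbol (a;p)_k = ∏_{n=0}^{k−1}(1 − a p^n). -/
def qPoch (a p : ℝ) (k : ℕ) : ℝ := ∏ n ∈ Finset.range k, (1 - a * p ^ n)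

/-- (x;p)_k as a polynomial in x. -/
def qPochPoly (p : ℝ) (k : ℕ) : Polynomial ℝ :=
  ∏ n ∈ Finset.range k, (1 - Polynomial.C (p ^ n) * Polynomial.X)

/-- The big q-Jacobi polynomial
P^m_l(x) = Σ_{k=0}^{l−m} (−1)^k q^{−k(m+1)} (x;q⁻²)_k/(−q^{−2(m+1)};q⁻²)_k
  [l−m choose k][l+m+k choose k][m+k choose k]⁻¹.
(It vanishes identically for l < m, since then [l−m choose k] = 0.) -/
def qJacobi (q : ℝ) (l m : ℕ) : Polynomial ℝ :=
  ∑ k ∈ Finset.range (l - m + 1),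
    Polynomial.C ((-1 : ℝ) ^ k * q ^ (-(k : ℤ) * ((m : ℤ) + 1)) /
        qPoch (-(q ^ (-2 * ((m : ℤ) + 1)))) (q ^ (-2 : ℤ)) k *
      (qBinom q ((l : ℤ) - (m : ℤ)) k * qBinom q ((l : ℤ) + (m : ℤ) + k) k /
        qBinom q ((m : ℤ) + k) k)) *
    qPochPoly (q ^ (-2 : ℤ)) k

/-!
Expand `P^m_L` in the basis `φ_k = (x;q⁻²)_k`. Since `x φ_k = q^{2k} (φ_k - φ_{k+1})`,
multiplying an expansion by `x` and summing by parts turns the recurrence into a relation between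
consecutive coefficients. The coefficient of `φ_k` is a scalar depending on `m, k` times the two
q-falling factorials `[L-m]⋯[L-m-k+1]` and `[L+m+k]⋯[L+m+1]`; after cancelling the factors common
to all terms, the relation becomes an identity of Laurent polynomials in `q, q^L, q^m, q^k`, checked
by clearing denominators. For `k = 0` it reads `q^m [2L+1] = q^L [L+m+1] + q^{-L-1} [L-m]`.
-/

open Finset

section QNumbers

variable {q : ℝ}

lemma qNum_zero (q : ℝ) : qNum q 0 = 0 := by simp [qNum]

lemma qNum_pos (hq : 1 < q) {a : ℤ} (ha : 0 < a) : 0 < qNum q a := by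
  have : q⁻¹ < 1 := inv_lt_one_of_one_lt₀ hq
  have : q ^ (-a) < q ^ a := zpow_lt_zpow_right₀ hq (by omega)
  exact div_pos (by linarith) (by linarith)

lemma qFact_succ (q : ℝ) (n : ℕ) : qFact q (n + 1) = qFact q n * qNum q (n + 1) :=
  prod_range_succ _ n

lemma qFact_pos (hq : 1 < q) (n : ℕ) : 0 < qFact q n :=
  prod_pos fun _ _ => qNum_pos hq (by positivity)

lemma qPoch_succ (a p : ℝ) (k : ℕ) : qPoch a p (k + 1) = qPoch a p k * (1 - a * p ^ k) :=
  prod_range_succ _ k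

lemma qPoch_neg_pos {a p : ℝ} (ha : 0 ≤ a) (hp : 0 ≤ p) (k : ℕ) : 0 < qPoch (-a) p k :=
  prod_pos fun n _ => by have := mul_nonneg ha (pow_nonneg hp n); linarith

lemma eval_qPochPoly_succ (p x : ℝ) (k : ℕ) :
    (qPochPoly p (k + 1)).eval x = (qPochPoly p k).eval x * (1 - p ^ k * x) := by
  simp [qPochPoly, prod_range_succ, Polynomial.eval_prod]

lemma mul_eval_qPochPoly {p : ℝ} (hp : p ≠ 0) (x : ℝ) (k : ℕ) :
    x * (qPochPoly p k).eval x =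
      (p ^ k)⁻¹ * ((qPochPoly p k).eval x - (qPochPoly p (k + 1)).eval x) := by
  rw [eval_qPochPoly_succ]
  field_simp
  ring

def qFalling (q : ℝ) (a : ℤ) (k : ℕ) : ℝ := ∏ j ∈ range k, qNum q (a - j)

lemma qFalling_zero (q : ℝ) (a : ℤ) : qFalling q a 0 = 1 := prod_range_zero _

lemma qFalling_succ (q : ℝ) (a : ℤ) (k : ℕ) :
    qFalling q a (k + 1) = qFalling q a k * qNum q (a - k) :=
  prod_range_succ _ k

lemma qFalling_succ' (q : ℝ) (a : ℤ) (k : ℕ) :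
    qFalling q a (k + 1) = qNum q a * qFalling q (a - 1) k := by
  rw [qFalling, prod_range_succ', mul_comm, qFalling]
  congr 1
  · simp
  · exact prod_congr rfl fun j _ => by push_cast; ring_nf

lemma qNum_mul_qFalling (q : ℝ) (a : ℤ) (k : ℕ) :
    qNum q (a + 1) * qFalling q a k = qFalling q (a + 1) k * qNum q (a + 1 - k) := by
  rw [← qFalling_succ, qFalling_succ', add_sub_cancel_right]

lemma qFalling_eq_zero (q : ℝ) {a : ℤ} {k : ℕ} (h₀ : 0 ≤ a) (h : a < k) : qFalling q a k = 0 :=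
  prod_eq_zero (i := a.toNat) (mem_range.mpr (by omega))
    (by rw [Int.toNat_of_nonneg h₀, sub_self, qNum_zero])

lemma qFact_eq_mul_qFalling (q : ℝ) {n k : ℕ} (h : k ≤ n) :
    qFact q n = qFact q (n - k) * qFalling q n k := by
  induction k with
  | zero => simp [qFalling_zero]
  | succ k ih =>
    have hr : n - k = n - (k + 1) + 1 := by omega
    rw [ih (by omega), hr, qFact_succ, qFalling_succ, mul_assoc, mul_comm (qFalling q n k)]
    congr 3
    omega

lemma qBinom_natCast (hq : 1 < q) (n k : ℕ) : qBinom q n k = qFalling q n k / qFact q k := by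
  by_cases h : k ≤ n
  · rw [qBinom, if_pos ⟨by positivity, by exact_mod_cast h⟩, ← Nat.cast_sub h, Int.toNat_natCast,
      Int.toNat_natCast, Int.toNat_natCast, qFact_eq_mul_qFalling q h]
    have := (qFact_pos hq k).ne'
    have := (qFact_pos hq (n - k)).ne'
    field_simp
  · rw [qBinom, if_neg (by omega), qFalling_eq_zero q (by positivity) (by omega), zero_div]

end QNumbers

section Identities

lemma qNum_three_term (q : ℝ) (L M : ℤ) :
    q ^ M * qNum q (2 * L + 1) = q ^ L * qNum q (L + M + 1) + q ^ (-L - 1) * qNum q (L - M) := by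
  rcases eq_or_ne (q - q⁻¹) 0 with h | h
  · simp [qNum, h]
  have hq0 : q ≠ 0 := by rintro rfl; simp at h
  simp only [qNum, two_mul, sub_eq_add_neg, neg_add, neg_neg, zpow_add₀ hq0, zpow_neg, zpow_one]
  field_simp
  ring

lemma qNum_coeff_identity (q : ℝ) (L M i : ℤ) :
    q ^ M * qNum q (2 * L + 1) * q ^ (2 * (i + 1)) * (qNum q (L - M - i) * qNum q (L + M + i + 1))
      + q ^ M * qNum q (2 * L + 1) * q ^ (2 * i) *
          (q ^ (M + 1) * ((1 + q ^ (-2 * (M + i + 1))) * (qNum q (i + 1) * qNum q (M + i + 1))))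
    = q ^ L * qNum q (L - M + 1) * (qNum q (L + M + i + 2) * qNum q (L + M + i + 1))
      + q ^ (-L - 1) * (qNum q (L - M - i) * qNum q (L - M - i - 1) * qNum q (L + M)) := by
  rcases eq_or_ne (q - q⁻¹) 0 with h | h
  · simp [qNum, h]
  have hq0 : q ≠ 0 := by rintro rfl; simp at h
  rw [show -2 * (M + i + 1) = -(M + i + 1) + -(M + i + 1) by ring]
  simp only [qNum, two_mul, sub_eq_add_neg, neg_add, neg_neg, zpow_add₀ hq0, zpow_neg, zpow_one]
  field_simp
  ring

end Identities

section Coefficients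

variable {q : ℝ}

def qJacobiScale (q : ℝ) (m k : ℕ) : ℝ :=
  (-1) ^ k * q ^ (-(k : ℤ) * ((m : ℤ) + 1)) * qFact q m /
    (qPoch (-(q ^ (-2 * ((m : ℤ) + 1)))) (q ^ (-2 : ℤ)) k * qFact q k * qFact q (m + k))

/-- The coefficient of `(x;q⁻²)_k` in `P^m_L` (see `eval_qJacobi`), for `L : ℤ` so that the
recurrence can shift `L` by `±1`. -/
def qJacobiCoeff (q : ℝ) (L : ℤ) (m k : ℕ) : ℝ :=
  qJacobiScale q m k * qFalling q (L - m) k * qFalling q (L + m + k) k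

lemma qJacobi_summand_coeff (hq : 1 < q) {L m : ℕ} (h : m ≤ L) (k : ℕ) :
    (-1 : ℝ) ^ k * q ^ (-(k : ℤ) * ((m : ℤ) + 1)) /
        qPoch (-(q ^ (-2 * ((m : ℤ) + 1)))) (q ^ (-2 : ℤ)) k *
      (qBinom q ((L : ℤ) - (m : ℤ)) k * qBinom q ((L : ℤ) + (m : ℤ) + k) k /
        qBinom q ((m : ℤ) + k) k) = qJacobiCoeff q L m k := by
  rw [show (L : ℤ) - m = ((L - m : ℕ) : ℤ) by omega,
    show (L : ℤ) + m + k = ((L + m + k : ℕ) : ℤ) by push_cast; ring,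
    show (m : ℤ) + k = ((m + k : ℕ) : ℤ) by push_cast; ring,
    qBinom_natCast hq, qBinom_natCast hq, qBinom_natCast hq,
    qJacobiCoeff, qJacobiScale, qFact_eq_mul_qFalling q (Nat.le_add_left k m), Nat.add_sub_cancel]
  have := (qFact_pos hq k).ne'
  have := (qFact_pos hq m).ne'
  have hq₀ : 0 < q := by linarith
  have := (qPoch_neg_pos (zpow_pos hq₀ (-2 * ((m : ℤ) + 1))).le (zpow_pos hq₀ (-2)).le k).ne'
  push_cast [Nat.cast_sub h]
  field_simp

lemma qJacobiCoeff_eq_zero (q : ℝ) {L : ℤ} {m k : ℕ} (hm : m ≤ L) (hk : L - m < k) :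
    qJacobiCoeff q L m k = 0 := by
  rw [qJacobiCoeff, qFalling_eq_zero q (by omega) hk, mul_zero, zero_mul]

lemma eval_qJacobi (hq : 1 < q) {L m N : ℕ} (h : m ≤ L) (hN : L - m < N) (x : ℝ) :
    (qJacobi q L m).eval x =
      ∑ k ∈ range N, qJacobiCoeff q L m k * (qPochPoly (q ^ (-2 : ℤ)) k).eval x := by
  simp only [qJacobi, Polynomial.eval_finsetSum, Polynomial.eval_mul, Polynomial.eval_C,
    qJacobi_summand_coeff hq h]
  refine sum_subset (range_subset_range.mpr hN) fun k _ hk => ?_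
  rw [qJacobiCoeff_eq_zero q (by omega) (by simp at hk; omega), zero_mul]

lemma qNum_mul_eval_qJacobi_pred (hq : 1 < q) {l m N : ℕ} (h : m ≤ l) (hN : l - m < N) (x : ℝ) :
    qNum q ((l : ℤ) - m) * (qJacobi q (l - 1) m).eval x = qNum q ((l : ℤ) - m) *
      ∑ k ∈ range N, qJacobiCoeff q ((l : ℤ) - 1) m k * (qPochPoly (q ^ (-2 : ℤ)) k).eval x := by
  rcases h.eq_or_lt with rfl | h
  · simp [qNum_zero]
  · rw [eval_qJacobi hq (L := l - 1) (N := N) (by omega) (by omega), Nat.cast_sub (by omega),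
      Nat.cast_one]

lemma qJacobiScale_eq_mul_succ (hq : 1 < q) (m k : ℕ) :
    qJacobiScale q m k = qJacobiScale q m (k + 1) *
      (-q ^ ((m : ℤ) + 1) * (1 + q ^ (-2 * ((m : ℤ) + k + 1))) *
        (qNum q ((k : ℤ) + 1) * qNum q ((m : ℤ) + k + 1))) := by
  have hq₀ : 0 < q := by linarith
  have hpoch : q ^ (-2 * ((m : ℤ) + 1)) * (q ^ (-2 : ℤ)) ^ k = q ^ (-2 * ((m : ℤ) + k + 1)) := by
    rw [← zpow_natCast, ← zpow_mul, ← zpow_add₀ hq₀.ne']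
    ring_nf
  have hpow : q ^ (-((k + 1 : ℕ) : ℤ) * ((m : ℤ) + 1)) =
      q ^ (-(k : ℤ) * ((m : ℤ) + 1)) / q ^ ((m : ℤ) + 1) := by
    rw [← zpow_sub₀ hq₀.ne']
    push_cast
    ring_nf
  rw [qJacobiScale, qJacobiScale, qPoch_succ, ← add_assoc, qFact_succ, qFact_succ, hpow,
    neg_mul (q ^ (-2 * ((m : ℤ) + 1))), hpoch, sub_neg_eq_add]
  have := (qFact_pos hq k).ne'
  have := (qFact_pos hq (m + k)).ne'
  have := (qNum_pos hq (a := (k : ℤ) + 1) (by omega)).ne'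
  have := (qNum_pos hq (a := (m : ℤ) + k + 1) (by omega)).ne'
  have := (qPoch_neg_pos (zpow_pos hq₀ (-2 * ((m : ℤ) + 1))).le (zpow_pos hq₀ (-2)).le k).ne'
  have : 1 + q ^ (-2 * ((m : ℤ) + k + 1)) ≠ 0 := by positivity
  push_cast
  field_simp
  ring

lemma qJacobiCoeff_zero (hq : 1 < q) (L : ℤ) (m : ℕ) : qJacobiCoeff q L m 0 = 1 := by
  simp [qJacobiCoeff, qJacobiScale, qFalling_zero, qPoch, show qFact q 0 = 1 from prod_range_zero _,
    (qFact_pos hq m).ne']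

lemma qJacobiCoeff_succ (hq : 1 < q) (L : ℤ) (m i : ℕ) :
    q ^ (2 * ((i : ℤ) + 1)) * (q ^ m * qNum q (2 * L + 1) * qJacobiCoeff q L m (i + 1))
      - q ^ (2 * (i : ℤ)) * (q ^ m * qNum q (2 * L + 1) * qJacobiCoeff q L m i)
    = q ^ L * qNum q (L + m + 1) * qJacobiCoeff q (L + 1) m (i + 1)
      + q ^ (-L - 1) * qNum q (L - m) * qJacobiCoeff q (L - 1) m (i + 1) := by
  have hA₁ : qFalling q (L - m) (i + 1) = qFalling q (L - m) i * qNum q (L - m - i) :=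
    qFalling_succ ..
  have hB₁ : qFalling q (L + m + (i + 1)) (i + 1) =
      qNum q (L + m + i + 1) * qFalling q (L + m + i) i := by
    rw [qFalling_succ', ← add_assoc, add_sub_cancel_right]
  have hA₂ : qFalling q (L + 1 - m) (i + 1) = qNum q (L - m + 1) * qFalling q (L - m) i := by
    rw [qFalling_succ', show L + 1 - m - 1 = L - m by ring, show L + 1 - m = L - m + 1 by ring]
  have hB₂ : qNum q (L + m + 1) * qFalling q (L + 1 + m + (i + 1)) (i + 1) =
      qNum q (L + m + i + 2) * qNum q (L + m + i + 1) * qFalling q (L + m + i) i := by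
    have h := qNum_mul_qFalling q (L + m + i) i
    rw [show L + m + i + 1 - i = L + m + 1 by ring] at h
    rw [qFalling_succ', show L + 1 + m + (i + 1) = L + m + i + 2 by ring,
      show L + m + i + 2 - 1 = L + m + i + 1 by ring]
    linear_combination qNum q (L + m + i + 2) * h.symm
  have hA₃ : qNum q (L - m) * qFalling q (L - 1 - m) (i + 1) =
      qFalling q (L - m) i * qNum q (L - m - i) * qNum q (L - m - i - 1) := by
    rw [show L - 1 - m = L - m - 1 by ring, ← qFalling_succ', qFalling_succ, qFalling_succ,
      Nat.cast_add_one, sub_add_eq_sub_sub]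
  have hB₃ : qFalling q (L - 1 + m + (i + 1)) (i + 1) =
      qFalling q (L + m + i) i * qNum q (L + m) := by
    rw [show L - 1 + m + (i + 1) = L + m + i by ring, qFalling_succ, add_sub_cancel_right]
  simp only [qJacobiCoeff, Nat.cast_add_one]
  rw [hA₁, hB₁, hA₂, hB₃, qJacobiScale_eq_mul_succ hq m i, ← zpow_natCast q m]
  -- every term is `qJacobiScale q m (i + 1) * qFalling q (L - m) i * qFalling q (L + m + i) i`
  -- times a product of q-numbers; the cofactors satisfy `qNum_coeff_identity`
  linear_combination
    qJacobiScale q m (i + 1) * qFalling q (L - m) i * qFalling q (L + m + i) i *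
        qNum_coeff_identity q L m i
      - q ^ L * qJacobiScale q m (i + 1) * qNum q (L - m + 1) * qFalling q (L - m) i * hB₂
      - q ^ (-L - 1) * qJacobiScale q m (i + 1) * qFalling q (L + m + i) i * qNum q (L + m) * hA₃

end Coefficients

lemma mul_sum_eq_sum_of_coeff_recurrence {R : Type*} [CommRing R] {x : R} {φ w c d : ℕ → R}
    (n : ℕ) (hφ : ∀ k, x * φ k = w k * (φ k - φ (k + 1))) (h₀ : w 0 * c 0 = d 0)
    (hsucc : ∀ k, w (k + 1) * c (k + 1) - w k * c k = d (k + 1)) (hn : c n = 0) :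
    x * ∑ k ∈ range (n + 1), c k * φ k = ∑ k ∈ range (n + 1), d k * φ k := by
  have hparts : ∀ n, ∑ k ∈ range (n + 1), w k * c k * (φ k - φ (k + 1)) =
      d 0 * φ 0 + ∑ k ∈ range n, d (k + 1) * φ (k + 1) - w n * c n * φ (n + 1) := by
    intro n
    induction n with
    | zero => simp only [zero_add, sum_range_one, range_zero, sum_empty, h₀]; ring
    | succ n ih => rw [sum_range_succ, ih, sum_range_succ, ← hsucc]; ring
  calc x * ∑ k ∈ range (n + 1), c k * φ k
      = ∑ k ∈ range (n + 1), w k * c k * (φ k - φ (k + 1)) := by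
        rw [mul_sum]
        exact sum_congr rfl fun k _ => by linear_combination c k * hφ k
    _ = ∑ k ∈ range (n + 1), d k * φ k := by
        rw [hparts, hn, sum_range_succ' (fun k => d k * φ k)]
        ring

/-- three-term recurrence
x q^m [2l+1] P^m_l(x) = q^l [l+m+1] P^m_{l+1}(x) + q^{−l−1}[l−m] P^m_{l−1}(x)
for 0 ≤ m ≤ l (P^m_{m−1} interpreted as 0; indeed `qJacobi q (m-1) m = 0`). -/
theorem stmt11 (q : ℝ) (hq : 1 < q) (l m : ℕ) (hml : m ≤ l) :
    ∀ x : ℝ,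
      x * q ^ (m : ℕ) * qNum q (2 * l + 1) * (qJacobi q l m).eval x =
        q ^ (l : ℕ) * qNum q ((l : ℤ) + m + 1) * (qJacobi q (l + 1) m).eval x +
        q ^ (-(l : ℤ) - 1) * qNum q ((l : ℤ) - m) * (qJacobi q (l - 1) m).eval x := by
  intro x
  have hP {L : ℕ} (h : m ≤ L) (h' : L ≤ l + 1) :=
    eval_qJacobi hq h (N := l - m + 1 + 1) (by omega) x
  rw [hP hml (by omega), hP (L := l + 1) (by omega) le_rfl, mul_assoc (q ^ (-(l : ℤ) - 1)),
    qNum_mul_eval_qJacobi_pred hq hml (N := l - m + 1 + 1) (by omega)]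
  have hw (k : ℕ) : ((q ^ (-2 : ℤ)) ^ k)⁻¹ = q ^ (2 * (k : ℤ)) := by
    rw [← zpow_natCast, ← zpow_mul, ← zpow_neg]
    ring_nf
  convert mul_sum_eq_sum_of_coeff_recurrence (x := x)
    (φ := fun k => (qPochPoly (q ^ (-2 : ℤ)) k).eval x) (w := fun k => q ^ (2 * (k : ℤ)))
    (c := fun k => q ^ m * qNum q (2 * l + 1) * qJacobiCoeff q l m k)
    (d := fun k => q ^ (l : ℤ) * qNum q (l + m + 1) * qJacobiCoeff q (l + 1) m k
      + q ^ (-(l : ℤ) - 1) * qNum q (l - m) * qJacobiCoeff q (l - 1) m k) (l - m + 1)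
    (fun k => by rw [mul_eval_qPochPoly (by positivity), hw]) ?_ (fun k => ?_)
    (by rw [qJacobiCoeff_eq_zero q (by omega) (by omega), mul_zero]) using 1
  · simp only [mul_sum]
    exact sum_congr rfl fun _ _ => by ring
  · simp only [mul_sum, ← sum_add_distrib, zpow_natCast, Nat.cast_add_one]
    exact sum_congr rfl fun _ _ => by ring
  · simp only [Nat.cast_zero, mul_zero, zpow_zero, one_mul, mul_one, qJacobiCoeff_zero hq,
      ← zpow_natCast q m]
    exact qNum_three_term q l m
  · push_cast
    exact qJacobiCoeff_succ hq l m k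
end
end

section
/- Let q > 1, λ = q − q⁻¹, z₀ ≠ 0 real. On the ℂ-vector space with basis {|M,ν,m⟩ : M,ν,m ∈ ℤ, ν ≤ M, m ≥ ν − M}, define X³|M,ν,m⟩ = q^{2ν}z₀|M,ν,m⟩, X⁺|M,ν,m⟩ = −(q²z₀/√(1+q²))√(q^{4M}−q^{4ν})|M,ν+1,m+1⟩, X⁻|M,ν,m⟩ = (qz₀/√(1+q²))√(q^{4M}−q^{4(ν−1)})|M,ν−1,m−1⟩ (zero when the square-root argument vanishes or indices leave the range). Then these operators satisfy X³X⁺ = q²X⁺X³, X³X⁻ = q⁻²X⁻X³, X⁻X⁺ − X⁺X⁻ = λX³X³, and R² := X³X³ − qX⁺X⁻ − q⁻¹X⁻X⁺ acts as q^{4M+2}z₀² on |M,ν,m⟩. -/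
/-!
X³ is diagonal with eigenvalue q^{2ν}z₀ on |M,ν,m⟩, while X⁺ and X⁻ shift ν by ±1; this gives the
two q-commutation relations. The products X⁻X⁺ and X⁺X⁻ are therefore diagonal as well, with
eigenvalues −q³z₀²/(1+q²)·(q^{4M} − q^{4ν}) and −q³z₀²/(1+q²)·(q^{4M} − q^{4(ν−1)}) (the first
also at ν = M, where X⁺ vanishes), and the last two relations become identities between
monomials in q.
-/

noncomputable section

/-- Index set {(M,ν,m) : M,ν,m ∈ ℤ, ν ≤ M, m ≥ ν − M}. -/
abbrev XIdx : Type := {v : ℤ × ℤ × ℤ // v.2.1 ≤ v.1 ∧ v.2.1 - v.1 ≤ v.2.2}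

/-- The ℂ-vector space with basis {|M,ν,m⟩}. -/
abbrev XSpace : Type := XIdx →₀ ℂ

/-- X³|M,ν,m⟩ = q^{2ν} z₀ |M,ν,m⟩. -/
def X3Op (q z0 : ℝ) : Module.End ℂ XSpace :=
  Finsupp.lsum ℂ fun v =>
    ((q ^ (2 * v.1.2.1) * z0 : ℝ) : ℂ) • Finsupp.lsingle v

/-- X⁺|M,ν,m⟩ = −(q²z₀/√(1+q²))√(q^{4M}−q^{4ν}) |M,ν+1,m+1⟩ (zero for ν = M). -/
def XPlusOp (q z0 : ℝ) : Module.End ℂ XSpace :=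
  Finsupp.lsum ℂ fun v =>
    if h : v.1.2.1 < v.1.1 then
      ((-(q ^ 2 * z0 / Real.sqrt (1 + q ^ 2)) *
          Real.sqrt (q ^ (4 * v.1.1) - q ^ (4 * v.1.2.1)) : ℝ) : ℂ) •
        Finsupp.lsingle ⟨(v.1.1, v.1.2.1 + 1, v.1.2.2 + 1), by
          have h1 := v.2.1; have h2 := v.2.2; dsimp only; omega⟩
    else 0

/-- X⁻|M,ν,m⟩ = (qz₀/√(1+q²))√(q^{4M}−q^{4(ν−1)}) |M,ν−1,m−1⟩. -/
def XMinusOp (q z0 : ℝ) : Module.End ℂ XSpace :=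
  Finsupp.lsum ℂ fun v =>
    (((q * z0 / Real.sqrt (1 + q ^ 2)) *
        Real.sqrt (q ^ (4 * v.1.1) - q ^ (4 * (v.1.2.1 - 1))) : ℝ) : ℂ) •
      Finsupp.lsingle ⟨(v.1.1, v.1.2.1 - 1, v.1.2.2 - 1), by
        have h1 := v.2.1; have h2 := v.2.2; dsimp only; omega⟩

namespace XIdx

def raise (v : XIdx) (h : v.1.2.1 < v.1.1) : XIdx :=
  ⟨(v.1.1, v.1.2.1 + 1, v.1.2.2 + 1), by have h1 := v.2.1; have h2 := v.2.2; dsimp only; omega⟩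

def lower (v : XIdx) : XIdx :=
  ⟨(v.1.1, v.1.2.1 - 1, v.1.2.2 - 1), by have h1 := v.2.1; have h2 := v.2.2; dsimp only; omega⟩

theorem lower_nu_lt (v : XIdx) : (lower v).1.2.1 < (lower v).1.1 := by
  have := v.2.1; simp only [lower]; omega

theorem lower_raise (v : XIdx) (h : v.1.2.1 < v.1.1) : lower (raise v h) = v := by
  ext <;> simp [raise, lower]

theorem raise_lower (v : XIdx) : raise (lower v) (lower_nu_lt v) = v := by
  ext <;> simp [raise, lower]

end XIdx

theorem zpow_four_mul {α : Type*} [DivisionMonoid α] (a : α) (n : ℤ) :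
    a ^ (4 * n) = (a ^ (2 * n)) ^ 2 := by
  rw [← zpow_natCast, ← zpow_mul]; ring_nf

theorem zpow_four_mul_sub_one {G₀ : Type*} [GroupWithZero G₀] {a : G₀} (ha : a ≠ 0) (n : ℤ) :
    a ^ (4 * (n - 1)) = (a ^ (2 * n)) ^ 2 / a ^ 4 := by
  rw [mul_sub, zpow_sub₀ ha, zpow_four_mul]; norm_num

open XIdx Finsupp

theorem Real.div_sqrt_mul_sqrt_mul_div_sqrt_mul_sqrt {s x : ℝ} (hs : 0 ≤ s) (hx : 0 ≤ x)
    (a b : ℝ) : a / √s * √x * (b / √s * √x) = a * b * x / s :=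
  calc a / √s * √x * (b / √s * √x) = a * b * (√x * √x) / (√s * √s) := by ring
    _ = a * b * x / s := by rw [Real.mul_self_sqrt hx, Real.mul_self_sqrt hs]

section

variable (q z0 : ℝ)

theorem X3Op_single (v : XIdx) :
    X3Op q z0 (single v 1) = ((q ^ (2 * v.1.2.1) * z0 : ℝ) : ℂ) • single v 1 := by
  simp [X3Op]

theorem XPlusOp_single_of_lt (v : XIdx) (h : v.1.2.1 < v.1.1) :
    XPlusOp q z0 (single v 1) =
      ((-(q ^ 2 * z0 / √(1 + q ^ 2)) * √(q ^ (4 * v.1.1) - q ^ (4 * v.1.2.1)) : ℝ) : ℂ) •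
        single (raise v h) 1 := by
  simp [XPlusOp, raise, h]

theorem XPlusOp_single_of_not_lt (v : XIdx) (h : ¬ v.1.2.1 < v.1.1) :
    XPlusOp q z0 (single v 1) = 0 := by
  simp [XPlusOp, h]

theorem XMinusOp_single (v : XIdx) :
    XMinusOp q z0 (single v 1) =
      ((q * z0 / √(1 + q ^ 2) * √(q ^ (4 * v.1.1) - q ^ (4 * (v.1.2.1 - 1))) : ℝ) : ℂ) •
        single (lower v) 1 := by
  simp [XMinusOp, lower]

theorem X3Op_mul_XPlusOp (hq : q ≠ 0) :
    X3Op q z0 * XPlusOp q z0 = ((q : ℂ) ^ 2) • (XPlusOp q z0 * X3Op q z0) := by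
  refine Finsupp.basisSingleOne.ext fun v => ?_
  simp only [coe_basisSingleOne, Module.End.mul_apply, LinearMap.smul_apply]
  by_cases h : v.1.2.1 < v.1.1
  · have hν : q ^ (2 * (v.1.2.1 + 1)) = q ^ 2 * q ^ (2 * v.1.2.1) := by
      rw [mul_add, zpow_add₀ hq, mul_comm]; norm_num
    rw [XPlusOp_single_of_lt _ _ _ h, map_smul, X3Op_single, X3Op_single, map_smul,
      XPlusOp_single_of_lt _ _ _ h, smul_smul, smul_smul, smul_smul]
    congr 1
    simp only [raise, hν]
    push_cast
    ring
  · rw [XPlusOp_single_of_not_lt _ _ _ h, map_zero, X3Op_single, map_smul,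
      XPlusOp_single_of_not_lt _ _ _ h, smul_zero, smul_zero]

theorem X3Op_mul_XMinusOp (hq : q ≠ 0) :
    X3Op q z0 * XMinusOp q z0 = ((q : ℂ) ^ 2)⁻¹ • (XMinusOp q z0 * X3Op q z0) := by
  refine Finsupp.basisSingleOne.ext fun v => ?_
  have hν : q ^ (2 * (v.1.2.1 - 1)) = (q ^ 2)⁻¹ * q ^ (2 * v.1.2.1) := by
    rw [mul_sub, zpow_sub₀ hq, div_eq_inv_mul]; norm_num
  simp only [coe_basisSingleOne, Module.End.mul_apply, LinearMap.smul_apply]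
  rw [XMinusOp_single, map_smul, X3Op_single, X3Op_single, map_smul, XMinusOp_single,
    smul_smul, smul_smul, smul_smul]
  congr 1
  simp only [lower, hν]
  push_cast
  ring

theorem XMinusOp_mul_XPlusOp_single (hq : 1 ≤ q) (v : XIdx) :
    (XMinusOp q z0 * XPlusOp q z0) (single v 1) =
      ((-(q ^ 3 * z0 ^ 2 / (1 + q ^ 2)) * (q ^ (4 * v.1.1) - q ^ (4 * v.1.2.1)) : ℝ) : ℂ) •
        single v 1 := by
  rw [Module.End.mul_apply]
  by_cases h : v.1.2.1 < v.1.1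
  · have hA : 0 ≤ q ^ (4 * v.1.1) - q ^ (4 * v.1.2.1) :=
      sub_nonneg.2 (zpow_le_zpow_right₀ hq (by omega))
    rw [XPlusOp_single_of_lt _ _ _ h, map_smul, XMinusOp_single, lower_raise, smul_smul,
      ← Complex.ofReal_mul]
    congr 2
    simp only [raise, add_sub_cancel_right]
    rw [← neg_div, Real.div_sqrt_mul_sqrt_mul_div_sqrt_mul_sqrt (by positivity) hA]
    ring
  · have hν : v.1.2.1 = v.1.1 := le_antisymm v.2.1 (not_lt.1 h)
    rw [XPlusOp_single_of_not_lt _ _ _ h, map_zero, hν, sub_self, mul_zero,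
      Complex.ofReal_zero, zero_smul]

theorem XPlusOp_mul_XMinusOp_single (hq : 1 ≤ q) (v : XIdx) :
    (XPlusOp q z0 * XMinusOp q z0) (single v 1) =
      ((-(q ^ 3 * z0 ^ 2 / (1 + q ^ 2)) * (q ^ (4 * v.1.1) - q ^ (4 * (v.1.2.1 - 1))) : ℝ) : ℂ) •
        single v 1 := by
  have hB : 0 ≤ q ^ (4 * v.1.1) - q ^ (4 * (v.1.2.1 - 1)) :=
    sub_nonneg.2 (zpow_le_zpow_right₀ hq (by have := v.2.1; omega))
  rw [Module.End.mul_apply, XMinusOp_single, map_smul, XPlusOp_single_of_lt _ _ _ (lower_nu_lt v),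
    raise_lower, smul_smul, ← Complex.ofReal_mul]
  congr 2
  simp only [lower]
  rw [← neg_div, mul_comm, Real.div_sqrt_mul_sqrt_mul_div_sqrt_mul_sqrt (by positivity) hB]
  ring

theorem XMinusOp_mul_XPlusOp_sub (hq : 1 ≤ q) :
    XMinusOp q z0 * XPlusOp q z0 - XPlusOp q z0 * XMinusOp q z0 =
      ((q : ℂ) - (q : ℂ)⁻¹) • (X3Op q z0 * X3Op q z0) := by
  have hq0 : q ≠ 0 := by positivity
  refine Finsupp.basisSingleOne.ext fun v => ?_
  have key : -(q ^ 3 * z0 ^ 2 / (1 + q ^ 2)) * (q ^ (4 * v.1.1) - q ^ (4 * v.1.2.1)) -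
      -(q ^ 3 * z0 ^ 2 / (1 + q ^ 2)) * (q ^ (4 * v.1.1) - q ^ (4 * (v.1.2.1 - 1))) =
      (q - q⁻¹) * (q ^ (2 * v.1.2.1) * z0) * (q ^ (2 * v.1.2.1) * z0) := by
    simp only [zpow_four_mul_sub_one hq0, zpow_four_mul]
    field_simp
    ring
  simp only [coe_basisSingleOne, LinearMap.sub_apply, LinearMap.smul_apply]
  rw [XMinusOp_mul_XPlusOp_single _ _ hq, XPlusOp_mul_XMinusOp_single _ _ hq,
    Module.End.mul_apply, X3Op_single, map_smul, X3Op_single, smul_smul, smul_smul, ← sub_smul]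
  exact congrArg (· • single v 1) (by exact_mod_cast key)

theorem casimir_single (hq : 1 ≤ q) (v : XIdx) :
    (X3Op q z0 * X3Op q z0 - (q : ℂ) • (XPlusOp q z0 * XMinusOp q z0) -
        (q : ℂ)⁻¹ • (XMinusOp q z0 * XPlusOp q z0)) (single v 1) =
      ((q ^ (4 * v.1.1 + 2) * z0 ^ 2 : ℝ) : ℂ) • single v 1 := by
  have hq0 : q ≠ 0 := by positivity
  have key : q ^ (2 * v.1.2.1) * z0 * (q ^ (2 * v.1.2.1) * z0) -
      q * (-(q ^ 3 * z0 ^ 2 / (1 + q ^ 2)) * (q ^ (4 * v.1.1) - q ^ (4 * (v.1.2.1 - 1)))) -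
      q⁻¹ * (-(q ^ 3 * z0 ^ 2 / (1 + q ^ 2)) * (q ^ (4 * v.1.1) - q ^ (4 * v.1.2.1))) =
      q ^ (4 * v.1.1 + 2) * z0 ^ 2 := by
    simp only [zpow_add₀ hq0, zpow_four_mul_sub_one hq0, zpow_four_mul]
    field_simp
    ring
  simp only [LinearMap.sub_apply, LinearMap.smul_apply]
  rw [XMinusOp_mul_XPlusOp_single _ _ hq, XPlusOp_mul_XMinusOp_single _ _ hq,
    Module.End.mul_apply, X3Op_single, map_smul, X3Op_single, smul_smul, smul_smul, smul_smul,
    ← sub_smul, ← sub_smul]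
  exact congrArg (· • single v 1) (by exact_mod_cast key)

end

theorem stmt18_general (q z0 : ℝ) (hq : 1 < q) :
    X3Op q z0 * XPlusOp q z0 = ((q : ℂ) ^ 2) • (XPlusOp q z0 * X3Op q z0) ∧
    X3Op q z0 * XMinusOp q z0 = ((q : ℂ) ^ 2)⁻¹ • (XMinusOp q z0 * X3Op q z0) ∧
    XMinusOp q z0 * XPlusOp q z0 - XPlusOp q z0 * XMinusOp q z0 =
      ((q : ℂ) - (q : ℂ)⁻¹) • (X3Op q z0 * X3Op q z0) ∧
    ∀ v : XIdx,
      (X3Op q z0 * X3Op q z0 - (q : ℂ) • (XPlusOp q z0 * XMinusOp q z0) -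
          (q : ℂ)⁻¹ • (XMinusOp q z0 * XPlusOp q z0)) (Finsupp.single v 1) =
        ((q ^ (4 * v.1.1 + 2) * z0 ^ 2 : ℝ) : ℂ) • Finsupp.single v 1 := by
  have hq0 : q ≠ 0 := by positivity
  exact ⟨X3Op_mul_XPlusOp q z0 hq0, X3Op_mul_XMinusOp q z0 hq0,
    XMinusOp_mul_XPlusOp_sub q z0 hq.le, casimir_single q z0 hq.le⟩

/-- these operators satisfy the ℝ³_q relations
X³X⁺ = q²X⁺X³, X³X⁻ = q⁻²X⁻X³, X⁻X⁺ − X⁺X⁻ = λX³X³ (λ = q − q⁻¹), and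
R² = X³X³ − qX⁺X⁻ − q⁻¹X⁻X⁺ acts on |M,ν,m⟩ as the scalar q^{4M+2}z₀². -/
theorem stmt18 (q z0 : ℝ) (hq : 1 < q) (hz : z0 ≠ 0) :
    X3Op q z0 * XPlusOp q z0 = ((q : ℂ) ^ 2) • (XPlusOp q z0 * X3Op q z0) ∧
    X3Op q z0 * XMinusOp q z0 = ((q : ℂ) ^ 2)⁻¹ • (XMinusOp q z0 * X3Op q z0) ∧
    XMinusOp q z0 * XPlusOp q z0 - XPlusOp q z0 * XMinusOp q z0 =
      ((q : ℂ) - (q : ℂ)⁻¹) • (X3Op q z0 * X3Op q z0) ∧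
    ∀ v : XIdx,
      (X3Op q z0 * X3Op q z0 - (q : ℂ) • (XPlusOp q z0 * XMinusOp q z0) -
          (q : ℂ)⁻¹ • (XMinusOp q z0 * XPlusOp q z0)) (Finsupp.single v 1) =
        ((q ^ (4 * v.1.1 + 2) * z0 ^ 2 : ℝ) : ℂ) • Finsupp.single v 1 :=
  stmt18_general q z0 hq

end
end
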